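/- arXiv:1902.03349 — 3 statements merged into one kernel-verified Lean document; each statement's English description precedes it below -/
import Mathlib

section
/- Let (p_k)_{k≥0} be a sequence in [0,1] and L_0 = n, L_{k+1} = 4·L_k, with n chosen so that 100·C·m²·e^{−m} ≤ m^{−1}/(8·14⁴) for all m ≥ n. Suppose p_0 ≤ (4·14²)^{−1} and p_{k+1} ≤ 14²·(p_k² + 100·C·L_k²·e^{−L_k}) for all k. Then p_k ≤ (4·14²)^{−1}·2^{−k} for all k, and in particular ∑_k 14·p_k < ∞. -/
open Real

/-- The recursion of the percolation criterion: if `L_0 = n`, `L_{k+1} = 4L_k`, with `n` such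
that `100·C·m²·e^{−m} ≤ m⁻¹/(8·14⁴)` for all `m ≥ n`, `p_0 ≤ (4·14²)⁻¹`, and
`p_{k+1} ≤ 14²(p_k² + 100·C·L_k²·e^{−L_k})`, then `p_k ≤ (4·14²)⁻¹·2^{−k}` for all `k`,
and in particular `∑_k 14·p_k < ∞`. -/
theorem percolation_criterion_recursion (C n : ℝ) (hC : 0 < C) (hn : 1 ≤ n)
    (p L : ℕ → ℝ)
    (hp01 : ∀ k, p k ∈ Set.Icc (0 : ℝ) 1)
    (hL0 : L 0 = n) (hLsucc : ∀ k, L (k + 1) = 4 * L k)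
    (hlarge : ∀ m : ℝ, n ≤ m → 100 * C * m ^ 2 * Real.exp (-m) ≤ m⁻¹ / (8 * 14 ^ 4))
    (hp0 : p 0 ≤ 1 / (4 * 14 ^ 2))
    (hrec : ∀ k, p (k + 1) ≤ 14 ^ 2 * ((p k) ^ 2 + 100 * C * (L k) ^ 2 * Real.exp (-(L k)))) :
    (∀ k, p k ≤ (1 / (4 * 14 ^ 2)) * (1 / 2) ^ k) ∧ Summable (fun k => 14 * p k) := by
  have hL : ∀ k, L k = 4 ^ k * n := by
    intro k
    induction k with
    | zero => simpa using hL0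
    | succ j ih => rw [hLsucc, ih]; ring
  have h4 : ∀ k : ℕ, (1 : ℝ) ≤ 4 ^ k := fun k => one_le_pow₀ (by norm_num)
  have hLn : ∀ k, n ≤ L k := by
    intro k; rw [hL k]; nlinarith [h4 k]
  have hLpos : ∀ k, 0 < L k := fun k => lt_of_lt_of_le (by linarith) (hLn k)
  have hT : ∀ k, 100 * C * (L k) ^ 2 * Real.exp (-(L k)) ≤ (L k)⁻¹ / (8 * 14 ^ 4) :=
    fun k => hlarge (L k) (hLn k)
  have hLinv : ∀ k, (L k)⁻¹ ≤ ((1 : ℝ) / 2) ^ k * (1 / 2) ^ k := by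
    intro k
    have h1 : (4 : ℝ) ^ k ≤ L k := by
      rw [hL k]; nlinarith [h4 k, pow_pos (by norm_num : (0:ℝ) < 4) k]
    have h2 : (L k)⁻¹ ≤ ((4 : ℝ) ^ k)⁻¹ := inv_anti₀ (by positivity) h1
    calc (L k)⁻¹ ≤ ((4 : ℝ) ^ k)⁻¹ := h2
      _ = (1 / 2) ^ k * (1 / 2) ^ k := by
          rw [← mul_pow, ← inv_pow]; norm_num
  have hmain : ∀ k, p k ≤ (1 / (4 * 14 ^ 2)) * (1 / 2) ^ k := by
    intro k
    induction k with
    | zero => simpa using hp0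
    | succ j ih =>
      cases j with
      | zero =>
        -- bound the error term at k = 0 by 1/614656
        have hT0 : 100 * C * (L 0) ^ 2 * Real.exp (-(L 0)) ≤ 1 / 614656 := by
          rw [hL0]
          rcases le_or_gt 2 n with h2 | h2
          · have h := hT 0
            rw [hL0] at h
            have hninv : n⁻¹ ≤ 1 / 2 := by
              have := inv_anti₀ (by norm_num : (0:ℝ) < 2) h2
              simpa using this
            calc 100 * C * n ^ 2 * Real.exp (-n) ≤ n⁻¹ / (8 * 14 ^ 4) := h
              _ ≤ (1/2) / (8 * 14 ^ 4) := by
                  apply div_le_div_of_nonneg_right hninv (by norm_num) |>.trans_eq rfl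
              _ = 1 / 614656 := by norm_num
          · have hpos : (0:ℝ) < n + 1 := by linarith
            have h1 := hlarge (n + 1) (by linarith)
            have h3 : (n + 1) * ((n + 1)⁻¹ / (8 * 14 ^ 4)) = 1 / 307328 := by
              field_simp
              norm_num
            have h2' := mul_le_mul_of_nonneg_left h1 hpos.le
            rw [h3] at h2'
            have h1' : 100 * C * (n + 1) ^ 3 * Real.exp (-(n + 1)) ≤ 1 / 307328 := by
              nlinarith [h2']
            have hkey : 2 * Real.exp 1 * n ^ 2 ≤ (n + 1) ^ 3 := by
              nlinarith [Real.exp_one_lt_d9, hn, h2.le]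
            have hE : Real.exp (-n) = Real.exp (-(n + 1)) * Real.exp 1 := by
              rw [← Real.exp_add]; ring_nf
            rw [hE]
            have hCE : (0:ℝ) ≤ 100 * C * Real.exp (-(n + 1)) := by positivity
            nlinarith [h1', mul_le_mul_of_nonneg_left hkey hCE,
              (Real.exp_pos (-(n+1))).le, (Real.exp_pos 1).le]
        have hr := hrec 0
        have hp00 := (hp01 0).1
        nlinarith [mul_self_le_mul_self hp00 (by simpa using ih : p 0 ≤ 1 / (4 * 14 ^ 2)), hT0]
      | succ i =>
        have hTk := hT (i + 1)
        have hLi := hLinv (i + 1)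
        have hrk := hrec (i + 1)
        have hy1 : ((1:ℝ)/2) ^ (i + 1) ≤ 1 / 2 := by
          simpa using pow_le_pow_of_le_one (by norm_num : (0:ℝ) ≤ 1/2)
            (by norm_num : (1:ℝ)/2 ≤ 1) (Nat.le_add_left 1 i)
        have hy0 : (0:ℝ) ≤ ((1:ℝ)/2) ^ (i + 1) := by positivity
        have hp0j := (hp01 (i + 1)).1
        have hps : ((1:ℝ)/2) ^ (i + 1 + 1) = (1/2) ^ (i + 1) * (1/2) := pow_succ _ _
        nlinarith [mul_self_le_mul_self hp0j ih, hTk, hLi, hrk,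
          mul_le_mul_of_nonneg_left hy1 hy0, hps]
  refine ⟨hmain, ?_⟩
  apply Summable.of_nonneg_of_le (fun k => by nlinarith [(hp01 k).1])
    (fun k => ?_) ((summable_geometric_two).mul_left (14 * (1 / (4 * 14 ^ 2))))
  have := hmain k
  have h0 : (0:ℝ) ≤ (1/2 : ℝ) ^ k := by positivity
  nlinarith [this]
end

section
/- Consider majority dynamics on Z². If the configuration η_t percolates (contains an infinite connected component of sites with opinion 1, using nearest-neighbor adjacency), then η_s percolates for all s ≥ t. Consequently, p_c(t) ≤ p_c(s) whenever t ≥ s, i.e., t ↦ p_c(t) is non-increasing. -/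
/-- A site configuration on `ℤ²`: `true` means open (opinion 1). -/
abbrev Config := (ℤ × ℤ) → Bool

/-- Nearest-neighbor adjacency in `ℤ²`. -/
def Adj (x y : ℤ × ℤ) : Prop := (x.1 - y.1).natAbs + (x.2 - y.2).natAbs = 1

/-- `f 0, …, f n` is a nearest-neighbor path of open sites of `η`. -/
def OpenPath (η : Config) (n : ℕ) (f : ℕ → ℤ × ℤ) : Prop :=
  (∀ i < n, Adj (f i) (f (i + 1))) ∧ ∀ i ≤ n, η (f i) = true

/-- `η` contains an infinite nearest-neighbor connected component of open sites
(equivalently, an infinite self-avoiding open path). -/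
def Percolates (η : Config) : Prop :=
  ∃ f : ℕ → ℤ × ℤ, Function.Injective f ∧ (∀ i, Adj (f i) (f (i + 1))) ∧ ∀ i, η (f i) = true

/-- The origin-type connection: there is an infinite self-avoiding open path starting at `x₀`. -/
def ConnectsToInfinity (η : Config) (x₀ : ℤ × ℤ) : Prop :=
  ∃ f : ℕ → ℤ × ℤ, f 0 = x₀ ∧ Function.Injective f ∧ (∀ i, Adj (f i) (f (i + 1))) ∧
    ∀ i, η (f i) = true

/-- Membership in the rectangle `[a₁, b₁] × [a₂, b₂]`. -/
def InRect (a b x : ℤ × ℤ) : Prop := a.1 ≤ x.1 ∧ x.1 ≤ b.1 ∧ a.2 ≤ x.2 ∧ x.2 ≤ b.2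

/-- `H(a,b)`: an open left-right crossing of the rectangle `[1,a] × [1,b]`. -/
def Crossing (a b : ℕ) (η : Config) : Prop :=
  ∃ n f, OpenPath η n f ∧ (∀ i ≤ n, InRect (1, 1) ((a : ℤ), (b : ℤ)) (f i)) ∧
    (f 0).1 = 1 ∧ (f n).1 = (a : ℤ)

/-- Membership in the box `[−m, m]²`. -/
def InBox (m : ℕ) (x : ℤ × ℤ) : Prop := |x.1| ≤ (m : ℤ) ∧ |x.2| ≤ (m : ℤ)

/-- `f 0, …, f n` is a closed nearest-neighbor loop. -/
def IsLoop (f : ℕ → ℤ × ℤ) (n : ℕ) : Prop := (∀ i < n, Adj (f i) (f (i + 1))) ∧ f n = f 0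

/-- The loop `f 0, …, f n` surrounds the box `[−m,m]²`: every nearest-neighbor path started
in the box that leaves every box must meet the loop. -/
def Surrounds (f : ℕ → ℤ × ℤ) (n m : ℕ) : Prop :=
  ∀ g : ℕ → ℤ × ℤ, InBox m (g 0) → (∀ i, Adj (g i) (g (i + 1))) →
    (∀ N : ℕ, ∃ i, ¬ InBox N (g i)) → ∃ i j, j ≤ n ∧ g i = f j

/-- `Cir(m,n)`: there is an open circuit surrounding `[−m,m]²` contained in `[−n,n]²`. -/
def Circuit (m n : ℕ) (η : Config) : Prop :=
  ∃ k f, IsLoop f k ∧ (∀ j ≤ k, InBox n (f j) ∧ η (f j) = true) ∧ Surrounds f k m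

/-- An increasing (monotone) event of configurations. -/
def IncreasingEvent (A : Set Config) : Prop :=
  ∀ η η' : Config, (∀ x, η x = true → η' x = true) → η ∈ A → η' ∈ A

/-- Positive association (FKG inequality) for a measure on configurations. -/
def PositivelyAssociated (μ : MeasureTheory.Measure Config) : Prop :=
  ∀ A B : Set Config, MeasurableSet A → MeasurableSet B →
    IncreasingEvent A → IncreasingEvent B → μ A * μ B ≤ μ (A ∩ B)

/-- The four nearest neighbors of a site. -/
def nbrs (x : ℤ × ℤ) : List (ℤ × ℤ) :=
  [(x.1 + 1, x.2), (x.1 - 1, x.2), (x.1, x.2 + 1), (x.1, x.2 - 1)]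

/-- The number of neighbors of `x` with opinion 1 in the configuration `η`. -/
def onesCount (η : Config) (x : ℤ × ℤ) : ℕ := (nbrs x).countP (fun y => η y)

/-- The majority update rule at `x`: adopt the majority opinion among the four neighbors,
keeping the current opinion in case of a tie. -/
def majUpdate (η : Config) (x : ℤ × ℤ) : Bool :=
  if 3 ≤ onesCount η x then true else if onesCount η x ≤ 1 then false else η x

/-- `F : ℝ → Config` is a trajectory of majority dynamics with clock ring times `R x` at each
site `x`: the opinion of `x` is constant on time intervals containing no ring of `x`, and at
each ring time the opinion of `x` becomes the majority opinion of the configuration just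
before the ring. -/
def IsMajorityTrajectory (R : (ℤ × ℤ) → Set ℝ) (F : ℝ → Config) : Prop :=
  (∀ x : ℤ × ℤ, ∀ s₁ s₂ : ℝ, 0 ≤ s₁ → s₁ ≤ s₂ →
    (∀ r ∈ R x, r ≤ s₁ ∨ s₂ < r) → F s₂ x = F s₁ x) ∧
  (∀ x : ℤ × ℤ, ∀ r ∈ R x, 0 < r →
    ∃ ε > (0 : ℝ), ∀ s : ℝ, r - ε < s → s < r → F r x = majUpdate (F s) x)

open MeasureTheory ProbabilityTheory

/-- The ring times of the Poisson clock at site `x`: partial sums of the i.i.d. exponential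
gap variables `G x 0, G x 1, …`. -/
def ringTimes {Ω : Type*} (G : (ℤ × ℤ) → ℕ → Ω → ℝ) (ω : Ω) : (ℤ × ℤ) → Set ℝ :=
  fun x => Set.range (fun n : ℕ => ∑ i ∈ Finset.range (n + 1), G x i ω)

/-- The critical percolation threshold at time `t` for the graphical construction `F`:
`p_c(t) = inf{p ∈ [0,1] : P[F_p percolates at time t] > 0}` (with the convention that the
infimum is `1` if no such `p` exists). -/
noncomputable def pcDyn {Ω : Type*} [MeasurableSpace Ω] (P : Measure Ω)
    (F : ℝ → Ω → ℝ → Config) (t : ℝ) : ℝ :=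
  sInf (insert 1 {p | p ∈ Set.Icc (0 : ℝ) 1 ∧ 0 < P {ω | Percolates (F p ω t)}})

/-!
Along an infinite self-avoiding path that is open at time `t`, every site has two open path
neighbours, so majority can close it only after one of these neighbours has closed. Following
first closing times along the path, either a tail of the path never closes, and is still open at
time `s`, or these times are strictly monotone along a tail of the path: an infinite
self-avoiding chain of sites ringing at monotone times in `(t, s]`.

Such a chain converges, so a tail of it rings inside one short time window. With independent
exponential clocks, a site rings in a window of length `3δ` with probability `O(δ)`,
independently over sites, and for small `δ` these rare sites do not percolate (there are `4 ^ n`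
walks of length `n`). Hence percolation is a.s. preserved, and `P[η_t percolates]` is
nondecreasing in `t`, which makes `p_c` nonincreasing.
-/

open MeasureTheory ProbabilityTheory Set Filter Topology Function
open scoped ENNReal

theorem List.two_le_countP_of_mem {α : Type*} [DecidableEq α] {l : List α} {p : α → Bool}
    {a b : α} (ha : a ∈ l) (hb : b ∈ l) (hab : a ≠ b) (hpa : p a) (hpb : p b) :
    2 ≤ l.countP p := by
  have hpos : 0 < (l.erase a).countP p :=
    List.countP_pos_iff.2 ⟨b, (List.mem_erase_of_ne hab.symm).2 hb, hpb⟩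
  rw [List.countP_erase, if_pos ⟨ha, hpa⟩] at hpos
  omega

theorem Adj.symm {x y : ℤ × ℤ} (h : Adj x y) : Adj y x := by
  unfold Adj at *; omega

theorem Adj.mem_nbrs {x y : ℤ × ℤ} (h : Adj x y) : y ∈ nbrs x := by
  obtain ⟨a, b⟩ := x; obtain ⟨c, d⟩ := y
  simp only [Adj] at h
  simp only [nbrs, List.mem_cons, Prod.mk.injEq, List.not_mem_nil, or_false]
  omega

theorem majUpdate_eq_true {η : Config} {x y z : ℤ × ℤ} (hx : η x = true) (hy : Adj x y)
    (hz : Adj x z) (hyz : y ≠ z) (hηy : η y = true) (hηz : η z = true) : majUpdate η x = true := by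
  have htwo : 2 ≤ onesCount η x := by
    classical
    exact List.two_le_countP_of_mem hy.mem_nbrs hz.mem_nbrs hyz hηy hηz
  rw [majUpdate, if_neg (show ¬ onesCount η x ≤ 1 by omega), hx, ite_self]

def nbrWalk (x : ℤ × ℤ) {n : ℕ} (d : Fin n → Fin 4) : ℕ → ℤ × ℤ
  | 0 => x
  | k + 1 => if h : k < n then (nbrs (nbrWalk x d k)).get (d ⟨k, h⟩) else nbrWalk x d k

theorem exists_nbrWalk_eq (p : ℕ → ℤ × ℤ) (n : ℕ) (hp : ∀ k < n, Adj (p k) (p (k + 1))) :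
    ∃ d : Fin n → Fin 4, ∀ k ≤ n, nbrWalk (p 0) d k = p k := by
  have hstep : ∀ k : Fin n, ∃ i : Fin 4, (nbrs (p k)).get i = p (k + 1) :=
    fun k => List.mem_iff_get.1 (hp k k.2).mem_nbrs
  choose d hd using hstep
  refine ⟨d, fun k hk => ?_⟩
  induction k with
  | zero => rfl
  | succ k ih =>
    rw [nbrWalk.eq_2, dif_pos (by omega), ih (by omega)]
    exact hd ⟨k, by omega⟩

theorem eventually_not_or_tail_strictMono_or_strictAnti {α : Type*} [LinearOrder α]
    {D : ℕ → Prop} {τ : ℕ → α}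
    (h : ∀ i, D (i + 1) → (D i ∧ τ i < τ (i + 1)) ∨ (D (i + 2) ∧ τ (i + 2) < τ (i + 1))) :
    (∃ M, ∀ i, M ≤ i → ¬ D i) ∨
      ∃ M, (∀ k, D (M + k)) ∧
        (StrictMono (fun k => τ (M + k)) ∨ StrictAnti (fun k => τ (M + k))) := by
  by_cases hdesc : ∃ i, D i ∧ D (i + 1) ∧ τ (i + 1) < τ i
  · -- one descent propagates forward forever
    obtain ⟨i, hdesc⟩ := hdesc
    have hall : ∀ k, D (i + k) ∧ D (i + k + 1) ∧ τ (i + k + 1) < τ (i + k) := by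
      intro k
      induction k with
      | zero => exact hdesc
      | succ k ih =>
        rcases h (i + k) ih.2.1 with ⟨-, hlt⟩ | ⟨hD, hlt⟩
        · exact absurd ih.2.2 hlt.not_gt
        · exact ⟨ih.2.1, hD, hlt⟩
    exact Or.inr ⟨i, fun k => (hall k).1, Or.inr (strictAnti_nat_of_succ_lt fun k => (hall k).2.2)⟩
  · -- without descents, `D` is closed downwards and `τ` increases
    push Not at hdesc
    have hstep : ∀ i, D (i + 1) → D i ∧ τ i < τ (i + 1) := fun i hi =>
      (h i hi).resolve_right fun ⟨hD, hlt⟩ => (hdesc (i + 1) hi hD).not_gt hlt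
    have hdown : ∀ j i, D (i + j) → D i := by
      intro j
      induction j with
      | zero => exact fun i hi => hi
      | succ j ih => exact fun i hi => (hstep i (ih (i + 1) (by rwa [Nat.add_right_comm]))).1
    by_cases hev : ∃ M, ∀ i, M ≤ i → ¬ D i
    · exact Or.inl hev
    · push Not at hev
      have hD : ∀ i, D i := fun i => by
        obtain ⟨j, hij, hj⟩ := hev i
        exact hdown (j - i) i (by rwa [Nat.add_sub_cancel' hij])
      exact Or.inr ⟨0, by simpa using hD, Or.inl (by
        simpa using strictMono_nat_of_lt_succ fun i => (hstep i (hD (i + 1))).2)⟩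

def flipTimes (R : (ℤ × ℤ) → Set ℝ) (F : ℝ → Config) (t s : ℝ) (x : ℤ × ℤ) : Set ℝ :=
  {ρ ∈ R x ∩ Ioc t s | F ρ x ≠ F t x}

def MonotoneRingChain (R : (ℤ × ℤ) → Set ℝ) (t s : ℝ) : Prop :=
  ∃ (g : ℕ → ℤ × ℤ) (r : ℕ → ℝ), Injective g ∧ (∀ k, Adj (g k) (g (k + 1))) ∧
    (∀ k, r k ∈ R (g k) ∩ Ioc t s) ∧ (StrictMono r ∨ StrictAnti r)

namespace IsMajorityTrajectory

variable {R : (ℤ × ℤ) → Set ℝ} {F : ℝ → Config} {t s : ℝ}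

theorem exists_flipTimes_le (hF : IsMajorityTrajectory R F) (ht : 0 ≤ t) {x : ℤ × ℤ}
    (hfin : (R x ∩ Ioc t s).Finite) {u : ℝ} (htu : t ≤ u) (hus : u ≤ s) (hne : F u x ≠ F t x) :
    ∃ ρ ∈ flipTimes R F t s x, ρ ≤ u := by
  set A := R x ∩ Ioc t u
  have hAfin : A.Finite := hfin.subset fun ρ hρ => ⟨hρ.1, hρ.2.1, hρ.2.2.trans hus⟩
  rcases A.eq_empty_or_nonempty with hA | hA
  · refine absurd (hF.1 x t u ht htu fun r hr => ?_) hne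
    by_contra! h
    exact hA.subset ⟨hr, h⟩
  -- the last ring of `x` before `u` sets its opinion at time `u`
  obtain ⟨ρ, hρA, hρmax⟩ := A.exists_max_image id hAfin hA
  have hρu : F u x = F ρ x := hF.1 x ρ u (ht.trans hρA.2.1.le) hρA.2.2 fun r hr => by
    by_contra! h
    exact absurd (hρmax r ⟨hr, hρA.2.1.trans h.1, h.2⟩) (not_le.2 h.1)
  exact ⟨ρ, ⟨⟨hρA.1, hρA.2.1, hρA.2.2.trans hus⟩, hρu ▸ hne⟩, hρA.2.2⟩

theorem eq_of_lt_flipTimes (hF : IsMajorityTrajectory R F) (ht : 0 ≤ t) {x : ℤ × ℤ}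
    (hfin : (R x ∩ Ioc t s).Finite) {u : ℝ} (htu : t ≤ u) (hus : u ≤ s)
    (hlt : ∀ ρ ∈ flipTimes R F t s x, u < ρ) : F u x = F t x := by
  by_contra hne
  obtain ⟨ρ, hρ, hρu⟩ := hF.exists_flipTimes_le ht hfin htu hus hne
  exact (hlt ρ hρ).not_ge hρu

/-- Just before the first flip of `x`, two open neighbours would make majority keep `x` open. -/
theorem exists_nbr_flip_before (hF : IsMajorityTrajectory R F) (ht : 0 ≤ t)
    (hfin : ∀ x, (R x ∩ Ioc t s).Finite) {x y z : ℤ × ℤ} (hy : Adj x y) (hz : Adj x z)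
    (hyz : y ≠ z) (hx : F t x = true) (hηy : F t y = true) (hηz : F t z = true) {ρ : ℝ}
    (hρ : ρ ∈ flipTimes R F t s x) (hfirst : ∀ ρ' ∈ flipTimes R F t s x, ρ ≤ ρ') :
    ∃ w ∈ ({y, z} : Set (ℤ × ℤ)), ∃ ρ' ∈ flipTimes R F t s w, ρ' < ρ := by
  obtain ⟨⟨hρR, htρ, hρs⟩, hρflip⟩ := hρ
  obtain ⟨ε, hε, hmaj⟩ := hF.2 x ρ hρR (ht.trans_lt htρ)
  set u := max (ρ - ε / 2) ((ρ + t) / 2)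
  have hut : t ≤ u := le_max_of_le_right (by linarith)
  have huρ : u < ρ := max_lt (by linarith) (by linarith)
  have hus : u ≤ s := huρ.le.trans hρs
  have hxu : F u x = true :=
    (hF.eq_of_lt_flipTimes ht (hfin x) hut hus fun ρ' hρ' => huρ.trans_le (hfirst ρ' hρ')).trans hx
  have hclosed : F u y = false ∨ F u z = false := by
    by_contra! h
    rw [hmaj u (by linarith [le_max_left (ρ - ε / 2) ((ρ + t) / 2)]) huρ,
      majUpdate_eq_true hxu hy hz hyz (by simpa using h.1) (by simpa using h.2), hx] at hρflip
    exact hρflip rfl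
  rcases hclosed with hw | hw
  · obtain ⟨ρ', hρ', hρ'u⟩ := hF.exists_flipTimes_le ht (hfin y) hut hus (by simp [hw, hηy])
    exact ⟨y, by simp, ρ', hρ', hρ'u.trans_lt huρ⟩
  · obtain ⟨ρ', hρ', hρ'u⟩ := hF.exists_flipTimes_le ht (hfin z) hut hus (by simp [hw, hηz])
    exact ⟨z, by simp, ρ', hρ', hρ'u.trans_lt huρ⟩

theorem percolates_of_percolates (hF : IsMajorityTrajectory R F) (ht : 0 ≤ t) (hts : t ≤ s)
    (hfin : ∀ x, (R x ∩ Ioc t s).Finite) (hchain : ¬ MonotoneRingChain R t s)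
    (hperc : Percolates (F t)) : Percolates (F s) := by
  obtain ⟨f, hinj, hadj, hopen⟩ := hperc
  have hflipFin : ∀ x, (flipTimes R F t s x).Finite := fun x => (hfin x).subset fun _ h => h.1
  set D : ℕ → Prop := fun i => (flipTimes R F t s (f i)).Nonempty
  set τ : ℕ → ℝ := fun i => sInf (flipTimes R F t s (f i))
  have hτmem : ∀ i, D i → τ i ∈ flipTimes R F t s (f i) := fun i hi => hi.csInf_mem (hflipFin _)
  have hτle : ∀ i, ∀ ρ ∈ flipTimes R F t s (f i), τ i ≤ ρ :=
    fun i _ hρ => csInf_le (hflipFin _).bddBelow hρ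
  have hsucc : ∀ i, D (i + 1) → (D i ∧ τ i < τ (i + 1)) ∨ (D (i + 2) ∧ τ (i + 2) < τ (i + 1)) := by
    intro i hi
    obtain ⟨w, hw, ρ', hρ', hlt⟩ := hF.exists_nbr_flip_before ht hfin (hadj i).symm (hadj (i + 1))
      (fun h => absurd (hinj h) (by omega)) (hopen _) (hopen _) (hopen _) (hτmem _ hi) (hτle _)
    rcases hw with rfl | rfl
    · exact Or.inl ⟨⟨ρ', hρ'⟩, (hτle _ _ hρ').trans_lt hlt⟩
    · exact Or.inr ⟨⟨ρ', hρ'⟩, (hτle _ _ hρ').trans_lt hlt⟩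
  rcases eventually_not_or_tail_strictMono_or_strictAnti hsucc with ⟨M, hM⟩ | ⟨M, hD, hmono⟩
  · refine ⟨fun k => f (M + k), hinj.comp (add_right_injective M), fun k => hadj (M + k),
      fun k => ?_⟩
    rw [hF.eq_of_lt_flipTimes ht (hfin _) hts le_rfl fun ρ hρ => absurd ⟨ρ, hρ⟩ (hM _ (by omega))]
    exact hopen _
  · exact (hchain ⟨fun k => f (M + k), fun k => τ (M + k), hinj.comp (add_right_injective M),
      fun k => hadj (M + k), fun k => (hτmem _ (hD k)).1, hmono⟩).elim

end IsMajorityTrajectory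

/-- A bounded monotone sequence converges, so a tail of the chain rings inside one window. -/
theorem MonotoneRingChain.exists_window {R : (ℤ × ℤ) → Set ℝ} {t s : ℝ}
    (h : MonotoneRingChain R t s) {w : ℝ} (hw : 0 < w) :
    ∃ (a : ℚ) (g : ℕ → ℤ × ℤ) (r : ℕ → ℝ), Injective g ∧ (∀ k, Adj (g k) (g (k + 1))) ∧
      ∀ k, r k ∈ R (g k) ∧ r k ∈ Ioc (a : ℝ) (a + w) ∧ r k ≤ s := by
  obtain ⟨g, r, hinj, hadj, hr, hmono⟩ := h
  obtain ⟨L, hL⟩ : ∃ L, Tendsto r atTop (𝓝 L) := by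
    rcases hmono with h | h
    · exact ⟨_, tendsto_atTop_ciSup h.monotone ⟨s, forall_mem_range.2 fun k => (hr k).2.2⟩⟩
    · exact ⟨_, tendsto_atTop_ciInf h.antitone ⟨t, forall_mem_range.2 fun k => (hr k).2.1.le⟩⟩
  obtain ⟨a, ha⟩ := exists_rat_btwn (show L - 2 * w / 3 < L - w / 3 by linarith)
  obtain ⟨K, hK⟩ := eventually_atTop.1
    (hL (Ioo_mem_nhds (show L - w / 3 < L by linarith) (show L < L + w / 3 by linarith)))
  refine ⟨a, fun k => g (K + k), fun k => r (K + k), hinj.comp (add_right_injective K),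
    fun k => hadj (K + k), fun k => ⟨(hr _).1, ?_, (hr _).2.2⟩⟩
  obtain ⟨h1, h2⟩ := hK (K + k) (by omega)
  constructor <;> linarith [ha.1, ha.2]

theorem ringTimes_inter_Iic_finite {Ω : Type*} {G : (ℤ × ℤ) → ℕ → Ω → ℝ} {ω : Ω} {x : ℤ × ℤ} {c : ℝ}
    (hpos : ∀ i, 0 ≤ G x i ω) (hn : ∃ n, c < ∑ i ∈ Finset.range n, G x i ω) :
    (ringTimes G ω x ∩ Iic c).Finite := by
  obtain ⟨n, hn⟩ := hn
  refine ((finite_lt_nat n).image fun k => ∑ i ∈ Finset.range (k + 1), G x i ω).subset ?_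
  rintro _ ⟨⟨k, rfl⟩, hk⟩
  refine ⟨k, show k < n from ?_, rfl⟩
  by_contra! hnk
  exact hn.not_ge (le_trans (Finset.sum_le_sum_of_subset_of_nonneg
    (Finset.range_subset_range.2 (show n ≤ k + 1 by omega)) fun i _ _ => hpos i) hk)

/-- Contains every ring of the clock with gaps `G` in `(a, b]` up to time `s`, while a union bound
over only `N` ring indices controls its probability. -/
def clockWindowEvent {Ω : Type*} (G : ℕ → Ω → ℝ) (N : ℕ) (s a b : ℝ) : Set Ω :=
  (⋃ n ∈ Finset.range N, {ω | ∑ i ∈ Finset.range (n + 1), G i ω ∈ Ioc a b}) ∪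
    {ω | ∑ i ∈ Finset.range N, G i ω ≤ s}

theorem mem_clockWindowEvent {Ω : Type*} {G : ℕ → Ω → ℝ} {N : ℕ} {s a b : ℝ} {ω : Ω}
    (hpos : ∀ i, 0 ≤ G i ω) {n : ℕ} (hab : ∑ i ∈ Finset.range (n + 1), G i ω ∈ Ioc a b)
    (hs : ∑ i ∈ Finset.range (n + 1), G i ω ≤ s) : ω ∈ clockWindowEvent G N s a b := by
  rcases lt_or_ge n N with hn | hn
  · exact Or.inl (mem_iUnion₂.2 ⟨n, Finset.mem_range.2 hn, hab⟩)
  · exact Or.inr ((Finset.sum_le_sum_of_subset_of_nonneg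
      (Finset.range_subset_range.2 (by omega)) fun i _ _ => hpos i).trans hs)

theorem measurableSet_clockWindowEvent {Ω : Type*} {m : MeasurableSpace Ω} {G : ℕ → Ω → ℝ}
    (hG : ∀ n, Measurable[m] (G n)) (N : ℕ) (s a b : ℝ) :
    MeasurableSet[m] (clockWindowEvent G N s a b) :=
  (Finset.measurableSet_biUnion _ fun _ _ =>
    (Finset.measurable_sum _ fun i _ => hG i) measurableSet_Ioc).union
    ((Finset.measurable_sum _ fun i _ => hG i) measurableSet_Iic)

theorem Real.exp_neg_sub_exp_neg_le {x y : ℝ} (hx : 0 ≤ x) (hxy : x ≤ y) :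
    Real.exp (-x) - Real.exp (-y) ≤ y - x := by
  have hsplit : Real.exp (-y) = Real.exp (-x) * Real.exp (x - y) := by
    rw [← Real.exp_add]; ring_nf
  have h1 : x - y + 1 ≤ Real.exp (x - y) := Real.add_one_le_exp _
  have h2 : Real.exp (-x) ≤ 1 := Real.exp_le_one_iff.2 (by linarith)
  nlinarith [Real.exp_pos (-x)]

def IsStdExponential {Ω : Type*} [MeasurableSpace Ω] (P : Measure Ω) (X : Ω → ℝ) : Prop :=
  ∀ s : ℝ, 0 ≤ s → (P {ω | X ω ≤ s}).toReal = 1 - Real.exp (-s)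

section Probability

variable {Ω : Type*} [MeasurableSpace Ω] {P : Measure Ω}

/-- Union bound over the `4 ^ n` walks of length `n` from `x`, each of probability at most
`q ^ (n + 1)`. -/
theorem measure_exists_infinite_path_eq_zero {E : (ℤ × ℤ) → Set Ω} (hE : iIndepSet E P)
    {q : ℝ≥0∞} (hq : ∀ y, P (E y) ≤ q) (hq4 : 4 * q < 1) (x : ℤ × ℤ) :
    P {ω | ∃ g : ℕ → ℤ × ℤ, g 0 = x ∧ Injective g ∧ (∀ k, Adj (g k) (g (k + 1))) ∧
      ∀ k, ω ∈ E (g k)} = 0 := by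
  classical
  set W : (n : ℕ) → (Fin n → Fin 4) → Set Ω := fun n d =>
    {ω | InjOn (nbrWalk x d) (Finset.range (n + 1)) ∧
      ∀ k ∈ Finset.range (n + 1), ω ∈ E (nbrWalk x d k)}
  have hW : ∀ n d, P (W n d) ≤ q ^ (n + 1) := by
    intro n d
    by_cases hinj : InjOn (nbrWalk x d) (Finset.range (n + 1))
    · calc P (W n d) ≤ P (⋂ y ∈ (Finset.range (n + 1)).image (nbrWalk x d), E y) :=
            measure_mono fun ω hω => by simpa using hω.2
        _ = ∏ y ∈ (Finset.range (n + 1)).image (nbrWalk x d), P (E y) := hE.meas_biInter _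
        _ ≤ ∏ _y ∈ (Finset.range (n + 1)).image (nbrWalk x d), q :=
            Finset.prod_le_prod' fun y _ => hq y
        _ = q ^ (n + 1) := by
            rw [Finset.prod_const, Finset.card_image_of_injOn hinj, Finset.card_range]
    · rw [show W n d = ∅ from eq_empty_of_forall_notMem fun ω hω => hinj hω.1, measure_empty]
      exact zero_le
  have hcover : ∀ n, {ω | ∃ g : ℕ → ℤ × ℤ, g 0 = x ∧ Injective g ∧
      (∀ k, Adj (g k) (g (k + 1))) ∧ ∀ k, ω ∈ E (g k)} ⊆ ⋃ d, W n d := by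
    rintro n ω ⟨g, rfl, hinj, hadj, hE⟩
    obtain ⟨d, hd⟩ := exists_nbrWalk_eq g n fun k _ => hadj k
    have hd' : ∀ k ∈ Finset.range (n + 1), nbrWalk (g 0) d k = g k :=
      fun k hk => hd k (Nat.lt_succ_iff.1 (Finset.mem_range.1 hk))
    refine mem_iUnion.2 ⟨d, fun k hk l hl hkl => hinj ?_, fun k hk => ?_⟩
    · rwa [hd' k hk, hd' l hl] at hkl
    · rw [hd' k hk]; exact hE k
  have hbound : ∀ n, P {ω | ∃ g : ℕ → ℤ × ℤ, g 0 = x ∧ Injective g ∧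
      (∀ k, Adj (g k) (g (k + 1))) ∧ ∀ k, ω ∈ E (g k)} ≤ q * (4 * q) ^ n := fun n =>
    calc _ ≤ ∑ d : Fin n → Fin 4, P (W n d) :=
          (measure_mono (hcover n)).trans (measure_iUnion_fintype_le _ _)
      _ ≤ ∑ _d : Fin n → Fin 4, q ^ (n + 1) := Finset.sum_le_sum fun d _ => hW n d
      _ = q * (4 * q) ^ n := by simp [pow_succ, mul_pow]; ring
  have hq_top : q ≠ ⊤ := fun h => by simp [h] at hq4
  have hlim : Tendsto (fun n : ℕ => q * (4 * q) ^ n) atTop (𝓝 0) := by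
    simpa using ENNReal.Tendsto.const_mul (ENNReal.tendsto_pow_atTop_nhds_zero_of_lt_one hq4)
      (Or.inr hq_top)
  exact le_antisymm (ge_of_tendsto' hlim hbound) zero_le

theorem pcDyn_le_pcDyn {F : ℝ → Ω → ℝ → Config} {t s : ℝ}
    (h : ∀ p ∈ Icc (0 : ℝ) 1, ∀ᵐ ω ∂P, Percolates (F p ω s) → Percolates (F p ω t)) :
    pcDyn P F t ≤ pcDyn P F s := by
  refine csInf_le_csInf ⟨0, ?_⟩ ⟨1, mem_insert _ _⟩ (insert_subset_insert
    fun p ⟨hp, hpos⟩ => ⟨hp, hpos.trans_le (measure_mono_ae (h p hp))⟩)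
  rintro p (rfl | ⟨hp, -⟩)
  exacts [zero_le_one, hp.1]

namespace IsStdExponential

variable [IsFiniteMeasure P] {X : Ω → ℝ}

theorem measure_le_of_nonpos (hX : IsStdExponential P X) {u : ℝ} (hu : u ≤ 0) :
    P {ω | X ω ≤ u} = 0 := by
  have h0 : (P {ω | X ω ≤ 0}).toReal = 0 := by simpa using hX 0 le_rfl
  exact measure_mono_null (fun ω (hω : X ω ≤ u) => show X ω ≤ 0 from hω.trans hu)
    (((ENNReal.toReal_eq_zero_iff _).1 h0).resolve_right (measure_ne_top P _))

theorem ae_pos (hX : IsStdExponential P X) : ∀ᵐ ω ∂P, 0 < X ω := by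
  rw [ae_iff]
  simpa using hX.measure_le_of_nonpos le_rfl

theorem toReal_measure_le (hX : IsStdExponential P X) (u : ℝ) :
    (P {ω | X ω ≤ u}).toReal = 1 - Real.exp (-max u 0) := by
  rcases le_total u 0 with hu | hu
  · simp [hX.measure_le_of_nonpos hu, max_eq_right hu]
  · rw [max_eq_left hu, hX u hu]

theorem measure_mem_Ioc_le (hX : IsStdExponential P X) (hXm : Measurable X) (a b : ℝ) :
    P {ω | X ω ∈ Ioc a b} ≤ ENNReal.ofReal (b - a) := by
  rcases le_total b a with hba | hab
  · simp [Ioc_eq_empty_of_le hba]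
  have hunion : {ω | X ω ≤ b} = {ω | X ω ∈ Ioc a b} ∪ {ω | X ω ≤ a} := by
    ext ω
    simp only [mem_ofPred_eq, mem_union, mem_Ioc]
    constructor
    · intro h; by_cases h' : X ω ≤ a <;> [exact Or.inr h'; exact Or.inl ⟨lt_of_not_ge h', h⟩]
    · rintro (⟨-, h⟩ | h) <;> linarith
  have hdisj : Disjoint {ω | X ω ∈ Ioc a b} {ω | X ω ≤ a} :=
    Set.disjoint_left.2 fun ω h h' => (not_lt.2 (show X ω ≤ a from h')) h.1
  have hreal : (P {ω | X ω ∈ Ioc a b}).toReal =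
      Real.exp (-max a 0) - Real.exp (-max b 0) := by
    have := congrArg ENNReal.toReal
      (hunion ▸ measure_union hdisj (hXm measurableSet_Iic) : P {ω | X ω ≤ b} = _)
    rw [ENNReal.toReal_add (measure_ne_top _ _) (measure_ne_top _ _), toReal_measure_le hX,
      toReal_measure_le hX] at this
    linarith
  rw [← ENNReal.ofReal_toReal (measure_ne_top P _), hreal]
  refine ENNReal.ofReal_le_ofReal ((Real.exp_neg_sub_exp_neg_le (le_max_right a 0)
    (max_le_max_right 0 hab)).trans ?_)
  rcases le_total a 0 with ha | ha <;> rcases le_total b 0 with hb | hb <;>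
    simp [ha, hb] <;> linarith

end IsStdExponential

variable [IsProbabilityMeasure P]

theorem ProbabilityTheory.iIndep.iIndepSet_of_measurableSet_biSup {ι κ : Type*}
    {m : ι → MeasurableSpace Ω} (hle : ∀ i, m i ≤ ‹MeasurableSpace Ω›) (h : iIndep m P)
    {S : κ → Set ι} (hS : Pairwise (Disjoint on S)) {E : κ → Set Ω}
    (hE : ∀ k, MeasurableSet[⨆ i ∈ S k, m i] (E k)) : iIndepSet E P := by
  classical
  rw [iIndepSet_iff_meas_biInter fun k => iSup₂_le (fun i _ => hle i) _ (hE k)]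
  intro K
  induction K using Finset.induction_on with
  | empty => simp
  | insert k K hk ih =>
    rw [Finset.set_biInter_insert, Finset.prod_insert hk, ← ih]
    have hdisj : Disjoint (S k) (⋃ j ∈ K, S j) :=
      disjoint_iUnion₂_right.2 fun j hj => hS fun hkj => hk (hkj ▸ hj)
    refine (Indep_iff _ _ _).1 (indep_iSup_of_disjoint hle h hdisj) _ _ (hE k) ?_
    exact Finset.measurableSet_biInter K fun j hj =>
      (biSup_mono (fun i hi => mem_iUnion₂.2 ⟨j, hj, hi⟩) :
        ⨆ i ∈ S j, m i ≤ ⨆ i ∈ ⋃ j ∈ K, S j, m i) _ (hE j)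

theorem ProbabilityTheory.IndepFun.measure_add_mem_Ioc_le {X Y : Ω → ℝ} (hXY : IndepFun X Y P)
    (hX : Measurable X) (hY : Measurable Y)
    (hYIoc : ∀ a b, P {ω | Y ω ∈ Ioc a b} ≤ ENNReal.ofReal (b - a)) (a b : ℝ) :
    P {ω | X ω + Y ω ∈ Ioc a b} ≤ ENNReal.ofReal (b - a) := by
  have hS : MeasurableSet {z : ℝ × ℝ | z.1 + z.2 ∈ Ioc a b} :=
    (measurable_fst.add measurable_snd) measurableSet_Ioc
  have hslice : ∀ x : ℝ, (P.map Y) (Prod.mk x ⁻¹' {z : ℝ × ℝ | z.1 + z.2 ∈ Ioc a b}) ≤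
      ENNReal.ofReal (b - a) := fun x => by
    have hpre : Prod.mk x ⁻¹' {z : ℝ × ℝ | z.1 + z.2 ∈ Ioc a b} = Ioc (a - x) (b - x) := by
      ext y; simp only [mem_preimage, mem_ofPred_eq, mem_Ioc]; constructor <;> intro h <;>
        constructor <;> linarith [h.1, h.2]
    rw [hpre, Measure.map_apply hY measurableSet_Ioc]
    have := hYIoc (a - x) (b - x)
    rwa [sub_sub_sub_cancel_right] at this
  have := Measure.isProbabilityMeasure_map (μ := P) hX.aemeasurable
  calc P {ω | X ω + Y ω ∈ Ioc a b}
      = ((P.map X).prod (P.map Y)) {z : ℝ × ℝ | z.1 + z.2 ∈ Ioc a b} := by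
        rw [← (indepFun_iff_map_prod_eq_prod_map_map hX.aemeasurable hY.aemeasurable).1 hXY,
          Measure.map_apply (hX.prodMk hY) hS]
        rfl
    _ = ∫⁻ x, (P.map Y) (Prod.mk x ⁻¹' {z : ℝ × ℝ | z.1 + z.2 ∈ Ioc a b}) ∂(P.map X) :=
        Measure.prod_apply hS
    _ ≤ ∫⁻ _, ENNReal.ofReal (b - a) ∂(P.map X) := lintegral_mono hslice
    _ = ENNReal.ofReal (b - a) := by simp

section Clock

variable {G : ℕ → Ω → ℝ}

theorem measure_sum_range_succ_mem_Ioc_le (hG : iIndepFun G P) (hGm : ∀ n, Measurable (G n))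
    (hexp : ∀ n, IsStdExponential P (G n)) (n : ℕ) (a b : ℝ) :
    P {ω | ∑ i ∈ Finset.range (n + 1), G i ω ∈ Ioc a b} ≤ ENNReal.ofReal (b - a) := by
  have hsum : Measurable (∑ i ∈ Finset.range n, G i) := by
    simpa only [← Finset.sum_apply] using Finset.measurable_sum _ fun i _ => hGm i
  simpa [Finset.sum_range_succ, Finset.sum_apply] using
    (hG.indepFun_sum_range_succ hGm n).measure_add_mem_Ioc_le hsum (hGm n)
      ((hexp n).measure_mem_Ioc_le (hGm n)) a b

/-- Off a null set, `∑ i < n, G i ≤ c` forces all but `⌊c⌋₊` of the gaps to be at most `1`;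
each such choice of `n - ⌊c⌋₊` gaps has probability `(1 - e⁻¹) ^ (n - ⌊c⌋₊)`. -/
theorem measure_sum_range_le_le (hG : iIndepFun G P) (hexp : ∀ n, IsStdExponential P (G n))
    (c : ℝ) (n : ℕ) :
    P {ω | ∑ i ∈ Finset.range n, G i ω ≤ c} ≤
      ENNReal.ofReal (n.choose (n - ⌊c⌋₊) * (1 - Real.exp (-1)) ^ (n - ⌊c⌋₊)) := by
  classical
  set m := ⌊c⌋₊
  have hcover : {ω | ∑ i ∈ Finset.range n, G i ω ≤ c} ⊆ (⋃ i, {ω | G i ω ≤ 0}) ∪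
      ⋃ T ∈ (Finset.range n).powersetCard (n - m), ⋂ i ∈ T, {ω | G i ω ≤ 1} := by
    intro ω hω
    by_cases hpos : ∃ i, G i ω ≤ 0
    · exact Or.inl (mem_iUnion.2 hpos)
    push Not at hpos
    set big := (Finset.range n).filter (fun i => 1 < G i ω)
    have hbig : big.card ≤ m := Nat.le_floor <| calc
      (big.card : ℝ) = ∑ i ∈ big, 1 := by simp
      _ ≤ ∑ i ∈ big, G i ω := Finset.sum_le_sum fun i hi => (Finset.mem_filter.1 hi).2.le
      _ ≤ ∑ i ∈ Finset.range n, G i ω :=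
        Finset.sum_le_sum_of_subset_of_nonneg (Finset.filter_subset _ _)
          fun i _ _ => (hpos i).le
      _ ≤ c := hω
    obtain ⟨T, hT, hTcard⟩ := Finset.exists_subset_card_eq (s := Finset.range n \ big)
      (n := n - m) (le_trans (by rw [Finset.card_range]; omega) (Finset.le_card_sdiff big _))
    refine Or.inr (mem_iUnion₂.2 ⟨T, Finset.mem_powersetCard.2
      ⟨hT.trans Finset.sdiff_subset, hTcard⟩, mem_iInter₂.2 fun i hi => ?_⟩)
    have hi' := Finset.mem_sdiff.1 (hT hi)
    simpa [big, Finset.mem_range.1 hi'.1] using hi'.2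
  have hnull : P (⋃ i, {ω | G i ω ≤ 0}) = 0 :=
    measure_iUnion_null fun i => (hexp i).measure_le_of_nonpos le_rfl
  have hinter : ∀ T ∈ (Finset.range n).powersetCard (n - m),
      P (⋂ i ∈ T, {ω | G i ω ≤ 1}) = ENNReal.ofReal (1 - Real.exp (-1)) ^ (n - m) := by
    intro T hT
    rw [hG.meas_biInter (s := fun i => {ω | G i ω ≤ 1}) fun i _ => ⟨Iic 1, measurableSet_Iic, rfl⟩,
      Finset.prod_congr rfl fun i _ => by
        rw [← ENNReal.ofReal_toReal (measure_ne_top P _), hexp i 1 zero_le_one],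
      Finset.prod_const, (Finset.mem_powersetCard.1 hT).2]
  calc P {ω | ∑ i ∈ Finset.range n, G i ω ≤ c}
      ≤ P (⋃ i, {ω | G i ω ≤ 0}) +
          P (⋃ T ∈ (Finset.range n).powersetCard (n - m), ⋂ i ∈ T, {ω | G i ω ≤ 1}) :=
        (measure_mono hcover).trans (measure_union_le _ _)
    _ ≤ ∑ T ∈ (Finset.range n).powersetCard (n - m), P (⋂ i ∈ T, {ω | G i ω ≤ 1}) := by
        rw [hnull, zero_add]; exact measure_biUnion_finset_le _ _
    _ = ENNReal.ofReal (n.choose (n - m) * (1 - Real.exp (-1)) ^ (n - m)) := by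
        rw [Finset.sum_congr rfl hinter, Finset.sum_const, Finset.card_powersetCard,
          Finset.card_range, nsmul_eq_mul, ENNReal.ofReal_mul (by positivity),
          ENNReal.ofReal_natCast, ENNReal.ofReal_pow (by
            linarith [Real.exp_le_one_iff.2 (show (-1 : ℝ) ≤ 0 by norm_num)])]

theorem tendsto_ofReal_choose_mul_pow (m : ℕ) :
    Tendsto (fun n : ℕ => ENNReal.ofReal (n.choose (n - m) * (1 - Real.exp (-1)) ^ (n - m)))
      atTop (𝓝 0) := by
  set β := 1 - Real.exp (-1)
  have hβ0 : 0 < β := by linarith [Real.exp_lt_one_iff.2 (show (-1 : ℝ) < 0 by norm_num)]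
  have hβ1 : |β| < 1 := by rw [abs_of_pos hβ0]; linarith [Real.exp_pos (-1)]
  have hlim : Tendsto (fun n : ℕ => (n : ℝ) ^ m * β ^ n / β ^ m) atTop (𝓝 0) := by
    simpa using (tendsto_pow_const_mul_const_pow_of_abs_lt_one m hβ1).div_const (β ^ m)
  have hreal : Tendsto (fun n : ℕ => (n.choose (n - m) : ℝ) * β ^ (n - m)) atTop (𝓝 0) := by
    refine squeeze_zero' (Eventually.of_forall fun n => by positivity) ?_ hlim
    filter_upwards [eventually_ge_atTop m] with n hn
    calc (n.choose (n - m) : ℝ) * β ^ (n - m) = n.choose m * β ^ (n - m) := by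
          rw [Nat.choose_symm hn]
      _ ≤ n ^ m * β ^ (n - m) := by gcongr; exact_mod_cast Nat.choose_le_pow n m
      _ = n ^ m * β ^ n / β ^ m := by rw [← pow_sub_mul_pow β hn]; field_simp
  simpa using ENNReal.tendsto_ofReal hreal

theorem ae_exists_lt_sum_range (hG : iIndepFun G P) (hexp : ∀ n, IsStdExponential P (G n))
    (c : ℝ) : ∀ᵐ ω ∂P, ∃ n, c < ∑ i ∈ Finset.range n, G i ω := by
  rw [ae_iff]
  refine le_antisymm (ge_of_tendsto' (tendsto_ofReal_choose_mul_pow ⌊c⌋₊) fun n =>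
    (measure_mono fun ω hω => ?_).trans (measure_sum_range_le_le hG hexp c n)) zero_le
  exact not_lt.1 (not_exists.1 hω n)

theorem measure_clockWindowEvent_le (hG : iIndepFun G P)
    (hGm : ∀ n, Measurable (G n)) (hexp : ∀ n, IsStdExponential P (G n)) (N : ℕ) (s a b : ℝ) :
    P (clockWindowEvent G N s a b) ≤
      N * ENNReal.ofReal (b - a) + P {ω | ∑ i ∈ Finset.range N, G i ω ≤ s} :=
  calc _ ≤ ∑ n ∈ Finset.range N, P {ω | ∑ i ∈ Finset.range (n + 1), G i ω ∈ Ioc a b} +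
        P {ω | ∑ i ∈ Finset.range N, G i ω ≤ s} :=
        (measure_union_le _ _).trans (add_le_add_left (measure_biUnion_finset_le _ _) _)
    _ ≤ ∑ _n ∈ Finset.range N, ENNReal.ofReal (b - a) +
        P {ω | ∑ i ∈ Finset.range N, G i ω ≤ s} := by
        gcongr with n
        exact measure_sum_range_succ_mem_Ioc_le hG hGm hexp n a b
    _ = _ := by simp


theorem measure_clockWindowEvent_le_one_eighth (hG : iIndepFun G P)
    (hGm : ∀ n, Measurable (G n)) (hexp : ∀ n, IsStdExponential P (G n)) {N : ℕ} {s : ℝ}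
    (hN : P {ω | ∑ i ∈ Finset.range N, G i ω ≤ s} ≤ ENNReal.ofReal (1 / 16)) (a : ℝ) :
    P (clockWindowEvent G N s a (a + 1 / (16 * (N + 1)))) ≤ ENNReal.ofReal (1 / 8) :=
  calc _ ≤ N * ENNReal.ofReal (1 / (16 * (N + 1))) + ENNReal.ofReal (1 / 16) := by
        refine (measure_clockWindowEvent_le hG hGm hexp N s _ _).trans ?_
        rw [add_sub_cancel_left]
        gcongr
    _ ≤ ENNReal.ofReal (1 / 16) + ENNReal.ofReal (1 / 16) := by
        gcongr
        rw [← ENNReal.ofReal_natCast, ← ENNReal.ofReal_mul (by positivity)]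
        refine ENNReal.ofReal_le_ofReal ?_
        rw [show (N : ℝ) * (1 / (16 * (N + 1))) = N / (N + 1) / 16 by field_simp]
        gcongr
        exact (div_le_one (by positivity)).2 (by linarith)
    _ = ENNReal.ofReal (1 / 8) := by
        rw [← ENNReal.ofReal_add (by norm_num) (by norm_num)]; norm_num

end Clock

theorem ae_ringTimes_inter_Ioc_finite {G : (ℤ × ℤ) → ℕ → Ω → ℝ}
    (hG : iIndepFun (fun q : (ℤ × ℤ) × ℕ => G q.1 q.2) P)
    (hexp : ∀ x n, IsStdExponential P (G x n)) (t s : ℝ) :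
    ∀ᵐ ω ∂P, ∀ x, (ringTimes G ω x ∩ Ioc t s).Finite := by
  refine ae_all_iff.2 fun x => ?_
  filter_upwards [ae_all_iff.2 fun i => (hexp x i).ae_pos,
    ae_exists_lt_sum_range (hG.precomp (Prod.mk_right_injective x)) (hexp x) s] with ω hpos hn
  exact (ringTimes_inter_Iic_finite (fun i => (hpos i).le) hn).subset
    (inter_subset_inter_right _ Ioc_subset_Iic_self)

theorem iIndepSet_clockWindowEvent {G : (ℤ × ℤ) → ℕ → Ω → ℝ} (hGm : ∀ x n, Measurable (G x n))
    (hG : iIndepFun (fun q : (ℤ × ℤ) × ℕ => G q.1 q.2) P) (N : ℕ) (s a b : ℝ) :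
    iIndepSet (fun y => clockWindowEvent (G y) N s a b) P := by
  refine hG.iIndep.iIndepSet_of_measurableSet_biSup (fun q => (hGm q.1 q.2).comap_le)
    (S := fun y => Prod.fst ⁻¹' {y}) ?_
    fun y => measurableSet_clockWindowEvent (fun n => ?_) N s a b
  · intro y z hyz
    exact disjoint_left.2 fun q hy hz => hyz ((mem_singleton_iff.1 hy).symm.trans hz)
  · exact Measurable.of_comap_le (le_iSup₂_of_le (y, n) rfl le_rfl)

/-- Choose `N` with `P(N-th ring ≤ s) ≤ 1/16` at every site, and windows of width
`1 / (16 * (N + 1))`: the window events then have probability `≤ 1/8 < 1/4` and are independent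
over sites, so none of them percolates, while a monotone ring chain would make one of them
percolate. -/
theorem ae_not_monotoneRingChain {G : (ℤ × ℤ) → ℕ → Ω → ℝ} (hGm : ∀ x n, Measurable (G x n))
    (hG : iIndepFun (fun q : (ℤ × ℤ) × ℕ => G q.1 q.2) P)
    (hexp : ∀ x n, IsStdExponential P (G x n)) (t s : ℝ) :
    ∀ᵐ ω ∂P, ¬ MonotoneRingChain (ringTimes G ω) t s := by
  obtain ⟨N, hN⟩ := ((tendsto_ofReal_choose_mul_pow ⌊s⌋₊).eventually
    (gt_mem_nhds (show (0 : ℝ≥0∞) < ENNReal.ofReal (1 / 16) by norm_num))).exists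
  have hw : (0 : ℝ) < 1 / (16 * (N + 1)) := by positivity
  set E : ℚ → (ℤ × ℤ) → Set Ω := fun a y =>
    clockWindowEvent (G y) N s a (a + 1 / (16 * (N + 1)))
  have hEle : ∀ a y, P (E a y) ≤ ENNReal.ofReal (1 / 8) := fun a y =>
    have hGy := hG.precomp (Prod.mk_right_injective y)
    measure_clockWindowEvent_le_one_eighth hGy (hGm y) (hexp y)
      ((measure_sum_range_le_le hGy (hexp y) s N).trans hN.le) a
  have hsubcrit : 4 * ENNReal.ofReal (1 / 8) < 1 := by
    rw [← ENNReal.ofReal_ofNat 4, ← ENNReal.ofReal_mul (by norm_num), ENNReal.ofReal_lt_one]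
    norm_num
  have hnull : ∀ a x, P {ω | ∃ g : ℕ → ℤ × ℤ, g 0 = x ∧ Injective g ∧
      (∀ k, Adj (g k) (g (k + 1))) ∧ ∀ k, ω ∈ E a (g k)} = 0 := fun a x =>
    measure_exists_infinite_path_eq_zero (iIndepSet_clockWindowEvent hGm hG N s a _) (hEle a)
      hsubcrit x
  filter_upwards [ae_all_iff.2 fun x => ae_all_iff.2 fun n => (hexp x n).ae_pos,
    measure_eq_zero_iff_ae_notMem.1 (measure_iUnion_null fun a => measure_iUnion_null (hnull a))]
    with ω hpos hω hchain
  obtain ⟨a, g, r, hinj, hadj, hr⟩ := hchain.exists_window hw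
  refine hω (mem_iUnion₂.2 ⟨a, g 0, g, rfl, hinj, hadj, fun k => ?_⟩)
  obtain ⟨⟨n, hn⟩, hIoc, hs⟩ := hr k
  rw [← hn] at hIoc hs
  exact mem_clockWindowEvent (fun i => (hpos _ i).le) hIoc hs

end Probability

theorem percolation_preserved_and_pc_monotone_general {Ω : Type*} [MeasurableSpace Ω]
    (P : Measure Ω) [IsProbabilityMeasure P]
    (G : (ℤ × ℤ) → ℕ → Ω → ℝ) (U : (ℤ × ℤ) → Ω → ℝ)
    (hGmeas : ∀ x n, Measurable (G x n))
    (hindep : iIndepFun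
      (Sum.elim (fun q : (ℤ × ℤ) × ℕ => G q.1 q.2) U) P)
    (hexp : ∀ x n, ∀ s : ℝ, 0 ≤ s → (P {ω | G x n ω ≤ s}).toReal = 1 - Real.exp (-s))
    (F : ℝ → Ω → ℝ → Config)
    (hF : ∀ p ∈ Set.Icc (0 : ℝ) 1, ∀ᵐ ω ∂P,
      IsMajorityTrajectory (ringTimes G ω) (F p ω) ∧
      ∀ x, (F p ω 0 x = true ↔ U x ω ≤ p)) :
    (∀ p ∈ Set.Icc (0 : ℝ) 1, ∀ t s : ℝ, 0 ≤ t → t ≤ s →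
      ∀ᵐ ω ∂P, Percolates (F p ω t) → Percolates (F p ω s)) ∧
    (∀ t s : ℝ, 0 ≤ s → s ≤ t → pcDyn P F t ≤ pcDyn P F s) := by
  have hclocks : iIndepFun (fun q : (ℤ × ℤ) × ℕ => G q.1 q.2) P :=
    hindep.precomp Sum.inl_injective
  have hpreserve : ∀ p ∈ Icc (0 : ℝ) 1, ∀ t s : ℝ, 0 ≤ t → t ≤ s →
      ∀ᵐ ω ∂P, Percolates (F p ω t) → Percolates (F p ω s) := by
    intro p hp t s ht hts
    filter_upwards [hF p hp, ae_ringTimes_inter_Ioc_finite hclocks hexp t s,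
      ae_not_monotoneRingChain hGmeas hclocks hexp t s] with ω hω hfin hchain
    exact hω.1.percolates_of_percolates ht hts hfin hchain
  exact ⟨hpreserve, fun t s hs hst => pcDyn_le_pcDyn fun p hp => hpreserve p hp s t hs hst⟩

/-- Percolation is preserved by majority dynamics on `ℤ²`: in the graphical construction
(i.i.d. exponential clocks `G`, i.i.d. uniforms `U`, and for each density `p` a trajectory
`F p` started from `η₀(x) = 1{U_x ≤ p}`), for every `p ∈ [0,1]` and `0 ≤ t ≤ s`, almost
surely percolation of `η_t` implies percolation of `η_s`. Consequently the critical
percolation function `t ↦ p_c(t)` is non-increasing. -/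
theorem percolation_preserved_and_pc_monotone {Ω : Type*} [MeasurableSpace Ω]
    (P : Measure Ω) [IsProbabilityMeasure P]
    (G : (ℤ × ℤ) → ℕ → Ω → ℝ) (U : (ℤ × ℤ) → Ω → ℝ)
    (hGmeas : ∀ x n, Measurable (G x n)) (hUmeas : ∀ x, Measurable (U x))
    (hindep : iIndepFun
      (Sum.elim (fun q : (ℤ × ℤ) × ℕ => G q.1 q.2) U) P)
    (hexp : ∀ x n, ∀ s : ℝ, 0 ≤ s → (P {ω | G x n ω ≤ s}).toReal = 1 - Real.exp (-s))
    (hunif : ∀ x, ∀ s : ℝ, 0 ≤ s → s ≤ 1 → (P {ω | U x ω ≤ s}).toReal = s)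
    (F : ℝ → Ω → ℝ → Config)
    (hF : ∀ p ∈ Set.Icc (0 : ℝ) 1, ∀ᵐ ω ∂P,
      IsMajorityTrajectory (ringTimes G ω) (F p ω) ∧
      ∀ x, (F p ω 0 x = true ↔ U x ω ≤ p)) :
    (∀ p ∈ Set.Icc (0 : ℝ) 1, ∀ t s : ℝ, 0 ≤ t → t ≤ s →
      ∀ᵐ ω ∂P, Percolates (F p ω t) → Percolates (F p ω s)) ∧
    (∀ t s : ℝ, 0 ≤ s → s ≤ t → pcDyn P F t ≤ pcDyn P F s) :=
  percolation_preserved_and_pc_monotone_general P G U hGmeas hindep hexp F hF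
end

section
/- Let μ be a probability measure on {0,1}^{Z²}, invariant under translations and reflections, and suppose: (i) μ(H(3n,n)) ≥ c > 0 for all n (where H(a,b) is the long-direction crossing of an a×b rectangle), with the quantitative circuit bound μ(Cir(n/k, n)^c) ≤ (k)^{−c₁} + c₂·e^{−c₂·n/k} for n/k ≥ 1; (ii) for every even k, μ(A_n^{k,k/2}) → 1 as n → ∞, where A_n^{k,k/2} is the event of an open path in [1,n]² from the left side {1}×[1,n] to the middle k-th portion {n}×(n/2 − n/(2k), n/2 + n/(2k)] of the right side; (iii) μ is positively associated. Then μ(H(2n,n)) → 1 as n → ∞. -/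
open MeasureTheory Filter

/-- `A_n^{k,k/2}`: an open path inside `[1,n]²` from the left side `{1}×[1,n]` to the middle
portion `{n} × (n/2 − n/(2k), n/2 + n/(2k)]` of the right side. -/
def ArmToMiddle (n k : ℕ) (η : Config) : Prop :=
  ∃ m f, OpenPath η m f ∧ (∀ j ≤ m, InRect (1, 1) ((n : ℤ), (n : ℤ)) (f j)) ∧
    (f 0).1 = 1 ∧ (f m).1 = (n : ℤ) ∧
    (n : ℝ) / 2 - n / (2 * k) < ((f m).2 : ℝ) ∧ ((f m).2 : ℝ) ≤ (n : ℝ) / 2 + n / (2 * k)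

namespace CrossAux

lemma adj_symm {x y : ℤ × ℤ} (h : Adj x y) : Adj y x := by
  unfold Adj at *; omega

lemma adj_sub {x y w : ℤ × ℤ} (h : Adj x y) : Adj (x - w) (y - w) := by
  unfold Adj at *
  simp only [Prod.fst_sub, Prod.snd_sub] at *
  omega

/-- concatenation of two finite paths -/
def concatP (f g : ℕ → ℤ × ℤ) (a : ℕ) : ℕ → ℤ × ℤ := fun t => if t ≤ a then f t else g (t - a)

lemma concatP_le {f g : ℕ → ℤ × ℤ} {a i : ℕ} (h : i ≤ a) : concatP f g a i = f i := if_pos h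

lemma concatP_ge {f g : ℕ → ℤ × ℤ} {a : ℕ} (hj : f a = g 0) {i : ℕ} (h : a ≤ i) :
    concatP f g a i = g (i - a) := by
  rcases eq_or_lt_of_le h with rfl | h'
  · simp [concatP, hj]
  · exact if_neg (by omega)

lemma concatP_adj {f g : ℕ → ℤ × ℤ} {a b : ℕ}
    (hf : ∀ i < a, Adj (f i) (f (i + 1))) (hg : ∀ i < b, Adj (g i) (g (i + 1)))
    (hj : f a = g 0) : ∀ i < a + b, Adj (concatP f g a i) (concatP f g a (i + 1)) := by
  intro i hi
  rcases lt_or_ge i a with h | h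
  · rw [concatP_le (by omega : i ≤ a), concatP_le (by omega : i + 1 ≤ a)]
    exact hf i h
  · rw [concatP_ge hj h, concatP_ge hj (by omega : a ≤ i + 1),
      (by omega : i + 1 - a = (i - a) + 1)]
    exact hg (i - a) (by omega)

/-- generic measurability for path-type events -/
lemma measurableSet_pathProp (Q : ℕ → (ℕ → ℤ × ℤ) → Prop)
    (hQ : ∀ n (f g : ℕ → ℤ × ℤ), (∀ i ≤ n, f i = g i) → Q n f → Q n g) :
    MeasurableSet {η : Config | ∃ n f, Q n f ∧ ∀ i ≤ n, η (f i) = true} := by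
  have hrw : {η : Config | ∃ n f, Q n f ∧ ∀ i ≤ n, η (f i) = true} =
      ⋃ (n : ℕ), ⋃ (f : Fin (n + 1) → ℤ × ℤ), ⋃ (_ : Q n (fun i => f ⟨min i n, by omega⟩)),
        {η : Config | ∀ i ≤ n, η (f ⟨min i n, by omega⟩) = true} := by
    ext η
    simp only [Set.mem_setOf_eq, Set.mem_iUnion]
    constructor
    · rintro ⟨n, F, hQF, hη⟩
      refine ⟨n, fun i => F i.1, ?_, ?_⟩
      · exact hQ n F _ (fun i hi => by simp [Nat.min_eq_left hi]) hQF
      · intro i hi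
        simpa [Nat.min_eq_left hi] using hη i hi
    · rintro ⟨n, f, hQf, hη⟩
      exact ⟨n, fun i => f ⟨min i n, by omega⟩, hQf, hη⟩
  rw [hrw]
  refine MeasurableSet.iUnion fun n => MeasurableSet.iUnion fun f =>
    MeasurableSet.iUnion fun _ => ?_
  have : {η : Config | ∀ i ≤ n, η (f ⟨min i n, by omega⟩) = true} =
      ⋂ i ∈ Finset.range (n + 1), (fun η : Config => η (f ⟨min i n, by omega⟩)) ⁻¹' {true} := by
    ext η; simp [Nat.lt_succ_iff]
  rw [this]
  exact Finset.measurableSet_biInter _ fun i _ =>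
    (measurable_pi_apply _) (measurableSet_singleton _)

lemma increasing_pathProp (Q : ℕ → (ℕ → ℤ × ℤ) → Prop) :
    IncreasingEvent {η : Config | ∃ n f, Q n f ∧ ∀ i ≤ n, η (f i) = true} := by
  rintro η η' hle ⟨n, f, hq, ho⟩
  exact ⟨n, f, hq, fun i hi => hle _ (ho i hi)⟩

end CrossAux
namespace CrossAux

def CrossQ (a b : ℕ) (n : ℕ) (f : ℕ → ℤ × ℤ) : Prop :=
  (∀ i < n, Adj (f i) (f (i + 1))) ∧ (∀ i ≤ n, InRect (1, 1) ((a : ℤ), (b : ℤ)) (f i)) ∧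
    (f 0).1 = 1 ∧ (f n).1 = (a : ℤ)

def ArmQ (n k : ℕ) (m : ℕ) (f : ℕ → ℤ × ℤ) : Prop :=
  (∀ i < m, Adj (f i) (f (i + 1))) ∧ (∀ j ≤ m, InRect (1, 1) ((n : ℤ), (n : ℤ)) (f j)) ∧
    (f 0).1 = 1 ∧ (f m).1 = (n : ℤ) ∧
    (n : ℝ) / 2 - n / (2 * k) < ((f m).2 : ℝ) ∧ ((f m).2 : ℝ) ≤ (n : ℝ) / 2 + n / (2 * k)

def CircQ (m r : ℕ) (kk : ℕ) (f : ℕ → ℤ × ℤ) : Prop :=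
  IsLoop f kk ∧ (∀ j ≤ kk, InBox r (f j)) ∧ Surrounds f kk m

lemma crossing_set_eq (a b : ℕ) :
    {η : Config | Crossing a b η} = {η : Config | ∃ n f, CrossQ a b n f ∧ ∀ i ≤ n, η (f i) = true} := by
  ext η; constructor
  · rintro ⟨n, f, ⟨h1, h2⟩, h3, h4, h5⟩; exact ⟨n, f, ⟨h1, h3, h4, h5⟩, h2⟩
  · rintro ⟨n, f, ⟨h1, h3, h4, h5⟩, h2⟩; exact ⟨n, f, ⟨h1, h2⟩, h3, h4, h5⟩

lemma arm_set_eq (n k : ℕ) :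
    {η : Config | ArmToMiddle n k η} =
      {η : Config | ∃ m f, ArmQ n k m f ∧ ∀ i ≤ m, η (f i) = true} := by
  ext η; constructor
  · rintro ⟨m, f, ⟨h1, h2⟩, h3, h4, h5, h6, h7⟩; exact ⟨m, f, ⟨h1, h3, h4, h5, h6, h7⟩, h2⟩
  · rintro ⟨m, f, ⟨h1, h3, h4, h5, h6, h7⟩, h2⟩; exact ⟨m, f, ⟨h1, h2⟩, h3, h4, h5, h6, h7⟩

lemma circuit_set_eq (m r : ℕ) :
    {η : Config | Circuit m r η} =
      {η : Config | ∃ kk f, CircQ m r kk f ∧ ∀ i ≤ kk, η (f i) = true} := by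
  ext η; constructor
  · rintro ⟨kk, f, h1, h2, h3⟩
    exact ⟨kk, f, ⟨h1, fun j hj => (h2 j hj).1, h3⟩, fun j hj => (h2 j hj).2⟩
  · rintro ⟨kk, f, ⟨h1, h2, h3⟩, h4⟩
    exact ⟨kk, f, h1, fun j hj => ⟨h2 j hj, h4 j hj⟩, h3⟩

lemma crossQ_stable (a b : ℕ) : ∀ n (f g : ℕ → ℤ × ℤ), (∀ i ≤ n, f i = g i) →
    CrossQ a b n f → CrossQ a b n g := by
  rintro n f g hfg ⟨h1, h2, h3, h4⟩
  refine ⟨fun i hi => ?_, fun i hi => ?_, ?_, ?_⟩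
  · rw [← hfg i (by omega), ← hfg (i + 1) (by omega)]; exact h1 i hi
  · rw [← hfg i hi]; exact h2 i hi
  · rw [← hfg 0 (by omega)]; exact h3
  · rw [← hfg n le_rfl]; exact h4

lemma armQ_stable (n k : ℕ) : ∀ m (f g : ℕ → ℤ × ℤ), (∀ i ≤ m, f i = g i) →
    ArmQ n k m f → ArmQ n k m g := by
  rintro m f g hfg ⟨h1, h2, h3, h4, h5, h6⟩
  refine ⟨fun i hi => ?_, fun i hi => ?_, ?_, ?_, ?_, ?_⟩
  · rw [← hfg i (by omega), ← hfg (i + 1) (by omega)]; exact h1 i hi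
  · rw [← hfg i hi]; exact h2 i hi
  · rw [← hfg 0 (by omega)]; exact h3
  · rw [← hfg m le_rfl]; exact h4
  · rw [← hfg m le_rfl]; exact h5
  · rw [← hfg m le_rfl]; exact h6

lemma circQ_stable (m r : ℕ) : ∀ kk (f g : ℕ → ℤ × ℤ), (∀ i ≤ kk, f i = g i) →
    CircQ m r kk f → CircQ m r kk g := by
  rintro kk f g hfg ⟨⟨h1, h2⟩, h3, h4⟩
  refine ⟨⟨fun i hi => ?_, ?_⟩, fun j hj => ?_, ?_⟩
  · rw [← hfg i (by omega), ← hfg (i + 1) (by omega)]; exact h1 i hi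
  · rw [← hfg kk le_rfl, ← hfg 0 (by omega)]; exact h2
  · rw [← hfg j hj]; exact h3 j hj
  · intro gg hg0 hgadj hgesc
    obtain ⟨i, j, hj, hij⟩ := h4 gg hg0 hgadj hgesc
    exact ⟨i, j, hj, by rw [hij, hfg j hj]⟩

lemma measurableSet_crossing (a b : ℕ) : MeasurableSet {η : Config | Crossing a b η} := by
  rw [crossing_set_eq]; exact measurableSet_pathProp _ (crossQ_stable a b)

lemma measurableSet_arm (n k : ℕ) : MeasurableSet {η : Config | ArmToMiddle n k η} := by
  rw [arm_set_eq]; exact measurableSet_pathProp _ (armQ_stable n k)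

lemma measurableSet_circuit (m r : ℕ) : MeasurableSet {η : Config | Circuit m r η} := by
  rw [circuit_set_eq]; exact measurableSet_pathProp _ (circQ_stable m r)

lemma increasing_crossing (a b : ℕ) : IncreasingEvent {η : Config | Crossing a b η} := by
  rw [crossing_set_eq]; exact increasing_pathProp _

lemma increasing_arm (n k : ℕ) : IncreasingEvent {η : Config | ArmToMiddle n k η} := by
  rw [arm_set_eq]; exact increasing_pathProp _

lemma increasing_circuit (m r : ℕ) : IncreasingEvent {η : Config | Circuit m r η} := by
  rw [circuit_set_eq]; exact increasing_pathProp _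

lemma measurable_precomp (T : ℤ × ℤ → ℤ × ℤ) :
    Measurable (fun η : Config => (fun x => η (T x) : Config)) :=
  measurable_pi_lambda _ fun x => measurable_pi_apply (T x)

lemma increasing_preimage (T : ℤ × ℤ → ℤ × ℤ) {A : Set Config} (hA : IncreasingEvent A) :
    IncreasingEvent ((fun η : Config => (fun x => η (T x) : Config)) ⁻¹' A) := by
  intro η η' hle hη
  exact hA _ _ (fun x h => hle _ h) hη

end CrossAux
namespace CrossAux

lemma adj_add {x y w : ℤ × ℤ} (h : Adj x y) : Adj (x + w) (y + w) := by
  unfold Adj at *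
  simp only [Prod.fst_add, Prod.snd_add] at *
  omega

lemma glue (n h m r kk : ℕ) (η : Config)
    (hm : 1 ≤ m) (hh : r + 1 ≤ h) (hhr : h + r ≤ n)
    (hwin : ∀ y : ℤ, (n : ℝ) / 2 - n / (2 * kk) < (y : ℝ) →
      (y : ℝ) ≤ (n : ℝ) / 2 + n / (2 * kk) → |y - (h : ℤ)| ≤ (m : ℤ))
    (h1 : ArmToMiddle n kk η)
    (h2 : ArmToMiddle n kk (fun x : ℤ × ℤ => η ((-x.1, x.2) + ((2 * (n : ℤ) + 1), 0))))
    (h3 : Circuit m r (fun x : ℤ × ℤ => η (x + ((n : ℤ), (h : ℤ))))) :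
    Crossing (2 * n) n η := by
  obtain ⟨m1, f1, ⟨hadj1, hopen1⟩, hrect1, hx10, hx1m, hy1a, hy1b⟩ := h1
  obtain ⟨m2, ff, ⟨hadj2', hopen2'⟩, hrect2', hx20, hx2m, hy2a, hy2b⟩ := h2
  obtain ⟨k3, f3, ⟨hadj3, hloop3⟩, hbf3, hsur3⟩ := h3
  set w : ℤ × ℤ := ((n : ℤ), (h : ℤ)) with hw
  set g2 : ℕ → ℤ × ℤ := fun j => ((-(ff j).1, (ff j).2) + ((2 * (n : ℤ) + 1), 0)) with hg2
  have hopen2 : ∀ j ≤ m2, η (g2 j) = true := fun j hj => hopen2' j hj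
  have hg2x : ∀ j, (g2 j).1 = -(ff j).1 + (2 * (n : ℤ) + 1) := fun j => rfl
  have hg2y : ∀ j, (g2 j).2 = (ff j).2 + 0 := fun j => rfl
  have hadj2 : ∀ i < m2, Adj (g2 i) (g2 (i + 1)) := by
    intro i hi
    have hα := hadj2' i hi
    unfold Adj at hα ⊢
    rw [hg2x, hg2x, hg2y, hg2y]
    omega
  have hbox3 : ∀ j ≤ k3, InBox r (f3 j) := fun j hj => (hbf3 j hj).1
  have hopen3 : ∀ j ≤ k3, η (f3 j + w) = true := fun j hj => (hbf3 j hj).2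
  have hk3ne1 : k3 ≠ 1 := by
    intro hk
    have h01 := hadj3 0 (by omega)
    have hl : f3 (0 + 1) = f3 0 := by
      rw [hk] at hloop3
      simpa using hloop3
    rw [hl] at h01
    unfold Adj at h01
    omega
  -- === Step A : the first arm meets the circuit ===
  set G1 : ℕ → ℤ × ℤ := fun i => f1 (m1 - i) - w - (((i - m1 : ℕ) : ℤ), 0) with hG1
  have hG1x : ∀ i, (G1 i).1 = (f1 (m1 - i)).1 - (n : ℤ) - ((i - m1 : ℕ) : ℤ) := fun i => rfl
  have hG1y : ∀ i, (G1 i).2 = (f1 (m1 - i)).2 - (h : ℤ) - 0 := fun i => rfl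
  have hG1eq : ∀ i ≤ m1, G1 i = f1 (m1 - i) - w := by
    intro i hi
    show f1 (m1 - i) - w - _ = _
    rw [show i - m1 = 0 from by omega]
    simp [Prod.ext_iff]
  have hG1start : InBox m (G1 0) := by
    constructor
    · rw [hG1x]
      simp only [Nat.sub_zero, Nat.zero_sub, Nat.cast_zero]
      rw [hx1m, Int.abs_eq_natAbs]
      omega
    · rw [hG1y]
      simp only [Nat.sub_zero, sub_zero]
      have hα := hwin (f1 m1).2 hy1a hy1b
      rw [Int.abs_eq_natAbs] at hα ⊢
      omega
  have hG1adj : ∀ i, Adj (G1 i) (G1 (i + 1)) := by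
    intro i
    unfold Adj
    rw [hG1x, hG1x, hG1y, hG1y]
    rcases lt_or_ge i m1 with hi | hi
    · have hα := hadj1 (m1 - i - 1) (by omega)
      rw [show m1 - i - 1 + 1 = m1 - i from by omega] at hα
      rw [show m1 - (i + 1) = m1 - i - 1 from by omega]
      unfold Adj at hα
      omega
    · rw [show m1 - i = 0 from by omega, show m1 - (i + 1) = 0 from by omega]
      omega
  have hG1esc : ∀ N : ℕ, ∃ i, ¬ InBox N (G1 i) := by
    intro N
    refine ⟨m1 + (N + ((f1 0).1 - n).natAbs + 1), fun hbox => ?_⟩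
    have hb1 := hbox.1
    rw [hG1x, show m1 - (m1 + (N + ((f1 0).1 - n).natAbs + 1)) = 0 from by omega,
      show m1 + (N + ((f1 0).1 - n).natAbs + 1) - m1 = N + ((f1 0).1 - n).natAbs + 1 from by omega,
      Int.abs_eq_natAbs] at hb1
    omega
  obtain ⟨i1, j1, hj1le, hmeet1⟩ := hsur3 G1 hG1start hG1adj hG1esc
  have hbxj1 := (hbox3 j1 hj1le).1
  have hi1le : i1 ≤ m1 := by
    by_contra hgt
    push_neg at hgt
    have hx := congrArg Prod.fst hmeet1
    rw [hG1x, show m1 - i1 = 0 from by omega] at hx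
    rw [hx10] at hx
    rw [Int.abs_eq_natAbs] at hbxj1
    omega
  set a1 : ℕ := m1 - i1 with ha1def
  have ha1 : f1 a1 = f3 j1 + w := by
    rw [hG1eq i1 hi1le] at hmeet1
    exact sub_eq_iff_eq_add.mp hmeet1
  -- === Step B : the second arm meets the circuit ===
  set G2 : ℕ → ℤ × ℤ := fun i => g2 (m2 - i) - w + (((i - m2 : ℕ) : ℤ), 0) with hG2
  have hG2x : ∀ i, (G2 i).1 = (g2 (m2 - i)).1 - (n : ℤ) + ((i - m2 : ℕ) : ℤ) := fun i => rfl
  have hG2y : ∀ i, (G2 i).2 = (g2 (m2 - i)).2 - (h : ℤ) + 0 := fun i => rfl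
  have hG2eq : ∀ i ≤ m2, G2 i = g2 (m2 - i) - w := by
    intro i hi
    show g2 (m2 - i) - w + _ = _
    rw [show i - m2 = 0 from by omega]
    simp [Prod.ext_iff]
  have hG2start : InBox m (G2 0) := by
    constructor
    · rw [hG2x]
      simp only [Nat.sub_zero, Nat.zero_sub, Nat.cast_zero, add_zero]
      rw [hg2x, hx2m, Int.abs_eq_natAbs]
      omega
    · rw [hG2y]
      simp only [Nat.sub_zero, add_zero]
      rw [hg2y, add_zero]
      have hα := hwin (ff m2).2 hy2a hy2b
      rw [Int.abs_eq_natAbs] at hα ⊢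
      omega
  have hG2adj : ∀ i, Adj (G2 i) (G2 (i + 1)) := by
    intro i
    unfold Adj
    rw [hG2x, hG2x, hG2y, hG2y]
    rcases lt_or_ge i m2 with hi | hi
    · have hα := hadj2 (m2 - i - 1) (by omega)
      rw [show m2 - i - 1 + 1 = m2 - i from by omega] at hα
      rw [show m2 - (i + 1) = m2 - i - 1 from by omega]
      unfold Adj at hα
      omega
    · rw [show m2 - i = 0 from by omega, show m2 - (i + 1) = 0 from by omega]
      omega
  have hG2esc : ∀ N : ℕ, ∃ i, ¬ InBox N (G2 i) := by
    intro N
    refine ⟨m2 + (N + ((g2 0).1 - n).natAbs + 1), fun hbox => ?_⟩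
    have hb1 := hbox.1
    rw [hG2x, show m2 - (m2 + (N + ((g2 0).1 - n).natAbs + 1)) = 0 from by omega,
      show m2 + (N + ((g2 0).1 - n).natAbs + 1) - m2 = N + ((g2 0).1 - n).natAbs + 1 from by omega,
      Int.abs_eq_natAbs] at hb1
    omega
  obtain ⟨i2, j2, hj2le, hmeet2⟩ := hsur3 G2 hG2start hG2adj hG2esc
  have hbxj2 := (hbox3 j2 hj2le).1
  have hi2le : i2 ≤ m2 := by
    by_contra hgt
    push_neg at hgt
    have hx := congrArg Prod.fst hmeet2
    rw [hG2x, show m2 - i2 = 0 from by omega, hg2x, hx20] at hx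
    rw [Int.abs_eq_natAbs] at hbxj2
    omega
  set a2 : ℕ := m2 - i2 with ha2def
  have ha2 : g2 a2 = f3 j2 + w := by
    rw [hG2eq i2 hi2le] at hmeet2
    exact sub_eq_iff_eq_add.mp hmeet2
  -- === Step C : walk along the circuit from j1 to j2 ===
  have hmodsame : ∀ j ≤ k3, f3 (j % k3) = f3 j := by
    intro j hj
    rcases Nat.lt_or_ge j k3 with hlt | hge
    · rw [Nat.mod_eq_of_lt hlt]
    · rcases Nat.eq_zero_or_pos k3 with hk0 | hkpos
      · rw [hk0, Nat.mod_zero]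
      · have hje : j = k3 := by omega
        rw [hje, Nat.mod_self, hloop3]
  have hcycadj : ∀ i, 1 ≤ k3 → Adj (f3 (i % k3)) (f3 ((i + 1) % k3)) := by
    intro i hk
    have hk2 : 2 ≤ k3 := by omega
    have hlt : i % k3 < k3 := Nat.mod_lt _ (by omega)
    have e1 : (i + 1) % k3 = (i % k3 + 1) % k3 := by
      conv_lhs => rw [Nat.add_mod]
      rw [Nat.mod_eq_of_lt (show 1 < k3 by omega)]
    rcases lt_or_ge (i % k3 + 1) k3 with hc | hc
    · rw [e1, Nat.mod_eq_of_lt hc]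
      exact hadj3 _ hlt
    · have he : i % k3 + 1 = k3 := by omega
      rw [e1, he, Nat.mod_self]
      have hα := hadj3 (i % k3) hlt
      rw [he, hloop3] at hα
      exact hα
  set L : ℕ := if j1 % k3 ≤ j2 % k3 then j2 % k3 - j1 % k3 else k3 - j1 % k3 + j2 % k3 with hL
  have hLzero : k3 = 0 → (j1 = 0 ∧ j2 = 0 ∧ L = 0) := by
    intro hk0
    have hj1 : j1 = 0 := by omega
    have hj2 : j2 = 0 := by omega
    refine ⟨hj1, hj2, ?_⟩
    rw [hL, hj1, hj2, hk0]
    simp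
  have hLend : (j1 % k3 + L) % k3 = j2 % k3 := by
    rcases Nat.eq_zero_or_pos k3 with hk0 | hkpos
    · obtain ⟨e1, e2, e3⟩ := hLzero hk0
      rw [e1, e2, e3, hk0]
    · have h1' : j1 % k3 < k3 := Nat.mod_lt _ hkpos
      have h2' : j2 % k3 < k3 := Nat.mod_lt _ hkpos
      rw [hL]
      rcases le_or_gt (j1 % k3) (j2 % k3) with hc | hc
      · rw [if_pos hc, show j1 % k3 + (j2 % k3 - j1 % k3) = j2 % k3 from by omega,
          Nat.mod_eq_of_lt h2']
      · rw [if_neg (by omega), show j1 % k3 + (k3 - j1 % k3 + j2 % k3) = k3 + j2 % k3 from by omega,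
          Nat.add_mod_left, Nat.mod_mod_of_dvd _ dvd_rfl]
  set P2 : ℕ → ℤ × ℤ := fun t => f3 ((j1 % k3 + t) % k3) + w with hP2
  have hP2idx : ∀ t ≤ L, (j1 % k3 + t) % k3 ≤ k3 := by
    intro t ht
    rcases Nat.eq_zero_or_pos k3 with hk0 | hkpos
    · obtain ⟨e1, e2, e3⟩ := hLzero hk0
      subst hk0
      simp only [Nat.mod_zero]
      omega
    · exact le_of_lt (Nat.mod_lt _ hkpos)
  have hP2adj : ∀ t < L, Adj (P2 t) (P2 (t + 1)) := by
    intro t ht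
    have hk : 1 ≤ k3 := by
      by_contra hk
      obtain ⟨e1, e2, e3⟩ := hLzero (by omega)
      omega
    show Adj (f3 ((j1 % k3 + t) % k3) + w) (f3 ((j1 % k3 + (t + 1)) % k3) + w)
    rw [show j1 % k3 + (t + 1) = (j1 % k3 + t) + 1 from by omega]
    exact adj_add (hcycadj _ hk)
  have hjunc1 : f1 a1 = P2 0 := by
    show f1 a1 = f3 ((j1 % k3 + 0) % k3) + w
    rw [Nat.add_zero, Nat.mod_mod_of_dvd _ dvd_rfl, hmodsame j1 hj1le]
    exact ha1
  have hP2end : P2 L = g2 a2 := by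
    show f3 ((j1 % k3 + L) % k3) + w = g2 a2
    rw [hLend, hmodsame j2 hj2le]
    exact ha2.symm
  -- === Step D : assemble the crossing ===
  set P3 : ℕ → ℤ × ℤ := fun t => g2 (a2 - t) with hP3
  have hP3adj : ∀ t < a2, Adj (P3 t) (P3 (t + 1)) := by
    intro t ht
    show Adj (g2 (a2 - t)) (g2 (a2 - (t + 1)))
    rw [show a2 - (t + 1) = a2 - t - 1 from by omega]
    have hα := hadj2 (a2 - t - 1) (by omega)
    rw [show a2 - t - 1 + 1 = a2 - t from by omega] at hα
    exact adj_symm hα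
  have hadj1' : ∀ i < a1, Adj (f1 i) (f1 (i + 1)) := fun i hi => hadj1 i (by omega)
  set I12 : ℕ → ℤ × ℤ := concatP f1 P2 a1 with hI12
  have hI12adj : ∀ i < a1 + L, Adj (I12 i) (I12 (i + 1)) := concatP_adj hadj1' hP2adj hjunc1
  have hjunc2 : I12 (a1 + L) = P3 0 := by
    rw [hI12, concatP_ge hjunc1 (show a1 ≤ a1 + L from by omega),
      show a1 + L - a1 = L from by omega, hP2end]
    show g2 a2 = g2 (a2 - 0)
    rw [Nat.sub_zero]
  set F : ℕ → ℤ × ℤ := concatP I12 P3 (a1 + L) with hF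
  have hFadj : ∀ i < a1 + L + a2, Adj (F i) (F (i + 1)) := concatP_adj hI12adj hP3adj hjunc2
  have hFval : ∀ i ≤ a1 + L + a2,
      (∃ j ≤ a1, F i = f1 j) ∨ (∃ t ≤ L, F i = P2 t) ∨ (∃ t ≤ a2, F i = P3 t) := by
    intro i hi
    rcases le_or_gt i a1 with hc1 | hc1
    · left
      exact ⟨i, hc1, by
        rw [hF, concatP_le (show i ≤ a1 + L from by omega), hI12, concatP_le hc1]⟩
    · rcases le_or_gt i (a1 + L) with hc2 | hc2
      · right; left
        exact ⟨i - a1, by omega, by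
          rw [hF, concatP_le (show i ≤ a1 + L from by omega), hI12,
            concatP_ge hjunc1 (show a1 ≤ i from by omega)]⟩
      · right; right
        exact ⟨i - (a1 + L), by omega, by
          rw [hF, concatP_ge hjunc2 (show a1 + L ≤ i from by omega)]⟩
  have hval_f1 : ∀ j ≤ a1, η (f1 j) = true ∧
      InRect (1, 1) (((2 * n : ℕ) : ℤ), (n : ℤ)) (f1 j) := by
    intro j hj
    obtain ⟨r1, r2, r3, r4⟩ := hrect1 j (by omega)
    exact ⟨hopen1 j (by omega), ⟨r1, by push_cast; omega, r3, r4⟩⟩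
  have hval_P2 : ∀ t ≤ L, η (P2 t) = true ∧
      InRect (1, 1) (((2 * n : ℕ) : ℤ), (n : ℤ)) (P2 t) := by
    intro t ht
    have hidx := hP2idx t ht
    obtain ⟨b1, b2⟩ := hbox3 _ hidx
    rw [abs_le] at b1 b2
    obtain ⟨b11, b12⟩ := b1
    obtain ⟨b21, b22⟩ := b2
    refine ⟨hopen3 _ hidx, ?_, ?_, ?_, ?_⟩
    · show (1 : ℤ) ≤ (P2 t).1
      show (1 : ℤ) ≤ (f3 ((j1 % k3 + t) % k3)).1 + (n : ℤ)
      omega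
    · show (P2 t).1 ≤ ((2 * n : ℕ) : ℤ)
      show (f3 ((j1 % k3 + t) % k3)).1 + (n : ℤ) ≤ ((2 * n : ℕ) : ℤ)
      push_cast
      omega
    · show (1 : ℤ) ≤ (P2 t).2
      show (1 : ℤ) ≤ (f3 ((j1 % k3 + t) % k3)).2 + (h : ℤ)
      omega
    · show (P2 t).2 ≤ (n : ℤ)
      show (f3 ((j1 % k3 + t) % k3)).2 + (h : ℤ) ≤ (n : ℤ)
      omega
  have hval_P3 : ∀ t ≤ a2, η (P3 t) = true ∧
      InRect (1, 1) (((2 * n : ℕ) : ℤ), (n : ℤ)) (P3 t) := by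
    intro t ht
    have hj : a2 - t ≤ m2 := by omega
    obtain ⟨r1, r2, r3, r4⟩ := hrect2' (a2 - t) hj
    refine ⟨hopen2 _ hj, ?_, ?_, ?_, ?_⟩
    · show (1 : ℤ) ≤ -(ff (a2 - t)).1 + (2 * (n : ℤ) + 1)
      omega
    · show -(ff (a2 - t)).1 + (2 * (n : ℤ) + 1) ≤ ((2 * n : ℕ) : ℤ)
      push_cast
      omega
    · show (1 : ℤ) ≤ (ff (a2 - t)).2 + 0
      omega
    · show (ff (a2 - t)).2 + 0 ≤ (n : ℤ)
      omega
  refine ⟨a1 + L + a2, F, ⟨hFadj, ?_⟩, ?_, ?_, ?_⟩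
  · intro i hi
    rcases hFval i hi with ⟨j, hj, he⟩ | ⟨t, htl, he⟩ | ⟨t, htl, he⟩
    · rw [he]; exact (hval_f1 j hj).1
    · rw [he]; exact (hval_P2 t htl).1
    · rw [he]; exact (hval_P3 t htl).1
  · intro i hi
    rcases hFval i hi with ⟨j, hj, he⟩ | ⟨t, htl, he⟩ | ⟨t, htl, he⟩
    · rw [he]; exact (hval_f1 j hj).2
    · rw [he]; exact (hval_P2 t htl).2
    · rw [he]; exact (hval_P3 t htl).2
  · rw [hF, concatP_le (show (0 : ℕ) ≤ a1 + L from by omega), hI12,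
      concatP_le (show (0 : ℕ) ≤ a1 from by omega)]
    exact hx10
  · rw [hF, concatP_ge hjunc2 (show a1 + L ≤ a1 + L + a2 from by omega),
      show a1 + L + a2 - (a1 + L) = a2 from by omega]
    show (g2 (a2 - a2)).1 = ((2 * n : ℕ) : ℤ)
    rw [Nat.sub_self, hg2x, hx20]
    push_cast
    ring

end CrossAux
namespace CrossAux

open MeasureTheory

lemma increasing_inter {A B : Set Config} (hA : IncreasingEvent A) (hB : IncreasingEvent B) :
    IncreasingEvent (A ∩ B) := fun η η' hle h => ⟨hA η η' hle h.1, hB η η' hle h.2⟩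

lemma key_step (μ : Measure Config) [IsProbabilityMeasure μ]
    (hFKG : PositivelyAssociated μ)
    (htrans : ∀ v : ℤ × ℤ, μ.map (fun η : Config => fun x : ℤ × ℤ => η (x + v)) = μ)
    (hreflH : μ.map (fun η : Config => fun x : ℤ × ℤ => η (-x.1, x.2)) = μ)
    (K n : ℕ) (hK : 1 ≤ K) (hn : 100 * K + 100 ≤ n) :
    (μ {η | ArmToMiddle n (4 * K) η}).toReal * (μ {η | ArmToMiddle n (4 * K) η}).toReal *
      (μ {η | Circuit ((n / 2 - 1) / K) (n / 2 - 1) η}).toReal ≤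
      (μ {η | Crossing (2 * n) n η}).toReal := by
  set h : ℕ := n / 2 with hhdef
  set r : ℕ := n / 2 - 1 with hrdef
  set mm : ℕ := (n / 2 - 1) / K with hmmdef
  have hKpos : 0 < K := hK
  -- geometric side conditions
  have hh' : r + 1 ≤ h := by omega
  have hhr : h + r ≤ n := by omega
  have hm : 1 ≤ mm := by
    rw [hmmdef, Nat.one_le_div_iff hKpos]
    omega
  -- the window condition
  have hwin : ∀ y : ℤ, (n : ℝ) / 2 - n / (2 * (4 * K : ℕ)) < (y : ℝ) →
      (y : ℝ) ≤ (n : ℝ) / 2 + n / (2 * (4 * K : ℕ)) → |y - (h : ℤ)| ≤ (mm : ℤ) := by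
    intro y hy1 hy2
    have hKR : (0 : ℝ) < (K : ℝ) := by exact_mod_cast hKpos
    have hP : (K : ℝ) * ((n : ℝ) / (2 * ((4 * K : ℕ) : ℝ))) = (n : ℝ) / 8 := by
      have h4 : ((4 * K : ℕ) : ℝ) = 4 * (K : ℝ) := by push_cast; ring
      rw [h4]
      field_simp
      ring
    -- nat facts, cast to ℝ
    have hnat1 : 2 * h ≤ n := by omega
    have hnat2 : n ≤ 2 * h + 1 := by omega
    have hnat3 : r + 1 = h := by omega
    have hnat4 : r < K * mm + K := by
      conv_lhs => rw [hrdef, ← Nat.div_add_mod (n / 2 - 1) K]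
      exact Nat.add_lt_add_left (Nat.mod_lt _ hKpos) _
    have hR1 : 2 * (h : ℝ) ≤ (n : ℝ) := by exact_mod_cast hnat1
    have hR2 : (n : ℝ) ≤ 2 * (h : ℝ) + 1 := by exact_mod_cast hnat2
    have hR3 : (r : ℝ) + 1 = (h : ℝ) := by exact_mod_cast hnat3
    have hR4 : (r : ℝ) < (K : ℝ) * (mm : ℝ) + (K : ℝ) := by exact_mod_cast hnat4
    have hRn : (100 : ℝ) * K + 100 ≤ (n : ℝ) := by exact_mod_cast hn
    -- multiply the window bounds by K
    have hy2' : (K : ℝ) * (y : ℝ) ≤ (K : ℝ) * ((n : ℝ) / 2) + (n : ℝ) / 8 := by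
      have := mul_le_mul_of_nonneg_left hy2 hKR.le
      rw [mul_add, hP] at this
      linarith
    have hy1' : (K : ℝ) * ((n : ℝ) / 2) - (n : ℝ) / 8 < (K : ℝ) * (y : ℝ) := by
      have := mul_lt_mul_of_pos_left hy1 hKR
      rw [mul_sub, hP] at this
      linarith
    have hyh1 : (y : ℝ) - (h : ℝ) ≤ (mm : ℝ) := by
      have hmul : (K : ℝ) * ((y : ℝ) - (h : ℝ)) ≤ (K : ℝ) * (mm : ℝ) := by nlinarith
      nlinarith
    have hyh2 : -(mm : ℝ) ≤ (y : ℝ) - (h : ℝ) := by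
      have hmul : (K : ℝ) * ((h : ℝ) - (y : ℝ)) ≤ (K : ℝ) * (mm : ℝ) := by nlinarith
      nlinarith
    rw [abs_le]
    constructor
    · exact_mod_cast hyh2
    · exact_mod_cast hyh1
  -- events
  set A1 : Set Config := {η | ArmToMiddle n (4 * K) η} with hA1def
  set Smap : Config → Config := fun η => fun x : ℤ × ℤ => η (x + ((2 * (n : ℤ) + 1), 0)) with hS
  set Rmap : Config → Config := fun η => fun x : ℤ × ℤ => η (-x.1, x.2) with hR
  set A2 : Set Config := (Rmap ∘ Smap) ⁻¹' A1 with hA2def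
  set C0 : Set Config := {η | Circuit mm r η} with hC0def
  set SC : Config → Config := fun η => fun x : ℤ × ℤ => η (x + ((n : ℤ), (h : ℤ))) with hSC
  set CC : Set Config := SC ⁻¹' C0 with hCCdef
  have hA1m : MeasurableSet A1 := measurableSet_arm n (4 * K)
  have hSmeas : Measurable Smap := measurable_precomp _
  have hRmeas : Measurable Rmap := measurable_precomp _
  have hSCmeas : Measurable SC := measurable_precomp _
  have hA2m : MeasurableSet A2 := (hRmeas.comp hSmeas) hA1m
  have hC0m : MeasurableSet C0 := measurableSet_circuit mm r
  have hCCm : MeasurableSet CC := hSCmeas hC0m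
  have hA1inc : IncreasingEvent A1 := increasing_arm n (4 * K)
  have hA2inc : IncreasingEvent A2 := fun η η' hle hη =>
    hA1inc _ _ (fun x hx => hle _ hx) hη
  have hCCinc : IncreasingEvent CC := fun η η' hle hη =>
    increasing_circuit mm r _ _ (fun x hx => hle _ hx) hη
  -- invariance
  have hμA2 : μ A2 = μ A1 := by
    have hmap : μ.map (Rmap ∘ Smap) = μ := by
      rw [← Measure.map_map hRmeas hSmeas, hS, htrans ((2 * (n : ℤ) + 1), 0), hR, hreflH]
    have := Measure.map_apply (hRmeas.comp hSmeas) hA1m (μ := μ)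
    rw [hmap] at this
    exact this.symm
  have hμCC : μ CC = μ C0 := by
    have hmap : μ.map SC = μ := by rw [hSC]; exact htrans ((n : ℤ), (h : ℤ))
    have := Measure.map_apply hSCmeas hC0m (μ := μ)
    rw [hmap] at this
    exact this.symm
  -- FKG
  have hAA : μ A1 * μ A2 ≤ μ (A1 ∩ A2) := hFKG A1 A2 hA1m hA2m hA1inc hA2inc
  have hAAC : μ (A1 ∩ A2) * μ CC ≤ μ ((A1 ∩ A2) ∩ CC) :=
    hFKG _ _ (hA1m.inter hA2m) hCCm (increasing_inter hA1inc hA2inc) hCCinc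
  have hsub : (A1 ∩ A2) ∩ CC ⊆ {η | Crossing (2 * n) n η} := by
    rintro η ⟨⟨hm1, hm2⟩, hm3⟩
    exact glue n h mm r (4 * K) η hm hh' hhr hwin hm1 hm2 hm3
  have hmain : μ A1 * μ A1 * μ C0 ≤ μ {η | Crossing (2 * n) n η} := by
    calc μ A1 * μ A1 * μ C0 = μ A1 * μ A2 * μ CC := by rw [hμA2, hμCC]
    _ ≤ μ (A1 ∩ A2) * μ CC := mul_le_mul_left hAA _
    _ ≤ μ ((A1 ∩ A2) ∩ CC) := hAAC
    _ ≤ μ {η | Crossing (2 * n) n η} := measure_mono hsub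
  have hfin := ENNReal.toReal_mono (measure_ne_top μ _) hmain
  rw [ENNReal.toReal_mul, ENNReal.toReal_mul] at hfin
  exact hfin

end CrossAux

/-- If `μ` is positively associated, invariant under translations and reflections, crosses
`3n × n` rectangles with probability at least `c > 0` (with the quantitative circuit bound
`μ(Cir(n/k, n)ᶜ) ≤ k^{−c₁} + c₂e^{−c₂·n/k}`), and for every even `k` the probability of an arm
from the left side of `[1,n]²` to the middle `k`-th portion of the right side tends to `1`,
then `μ(H(2n,n)) → 1` as `n → ∞`. -/
theorem crossing_2n_n_tendsto_one (μ : Measure Config) [IsProbabilityMeasure μ]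
    (hFKG : PositivelyAssociated μ)
    (htrans : ∀ v : ℤ × ℤ, μ.map (fun η : Config => fun x : ℤ × ℤ => η (x + v)) = μ)
    (hreflH : μ.map (fun η : Config => fun x : ℤ × ℤ => η (-x.1, x.2)) = μ)
    (hrefldiag : μ.map (fun η : Config => fun x : ℤ × ℤ => η (x.2, x.1)) = μ)
    (c : ℝ) (hc : 0 < c)
    (hcross3 : ∀ n : ℕ, 1 ≤ n → c ≤ (μ {η | Crossing (3 * n) n η}).toReal)
    (c₁ c₂ : ℝ) (hc₁ : 0 < c₁) (hc₂ : 0 < c₂)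
    (hcirc : ∀ n k : ℕ, 1 ≤ k → 1 ≤ n / k →
      (μ {η | Circuit (n / k) n η}ᶜ).toReal ≤
        (k : ℝ) ^ (-c₁) + c₂ * Real.exp (-c₂ * ((n / k : ℕ) : ℝ)))
    (harm : ∀ k : ℕ, Even k → 0 < k →
      Tendsto (fun n : ℕ => (μ {η | ArmToMiddle n k η}).toReal) atTop (nhds 1)) :
    Tendsto (fun n : ℕ => (μ {η | Crossing (2 * n) n η}).toReal) atTop (nhds 1) := by
  
  rw [Metric.tendsto_atTop]
  intro ε hε
  set ε' : ℝ := min ε 1 with hε'def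
  have hε'pos : 0 < ε' := lt_min hε one_pos
  have hε'le1 : ε' ≤ 1 := min_le_right _ _
  have hε'leε : ε' ≤ ε := min_le_left _ _
  -- choose K with K^{-c₁} < ε'/8
  have hK0 : Tendsto (fun K : ℕ => (K : ℝ) ^ (-c₁)) atTop (nhds 0) :=
    (tendsto_rpow_neg_atTop hc₁).comp tendsto_natCast_atTop_atTop
  obtain ⟨K, hKsm, hK1⟩ :=
    ((hK0.eventually (eventually_lt_nhds (show (0 : ℝ) < ε' / 8 by linarith))).and
      (eventually_ge_atTop 1)).exists
  have hKpos : 0 < K := hK1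
  -- arm probabilities tend to one
  have hA1ev : ∀ᶠ n in atTop, 1 - ε' / 8 < (μ {η | ArmToMiddle n (4 * K) η}).toReal :=
    (harm (4 * K) ⟨2 * K, by ring⟩ (by omega)).eventually
      (eventually_gt_nhds (by linarith))
  -- circuit scale tends to infinity
  have hmse : Tendsto (fun n : ℕ => (n / 2 - 1) / K) atTop atTop := by
    apply tendsto_atTop_atTop.mpr
    intro b
    refine ⟨2 * (K * (b + 1) + 1), fun n hn => ?_⟩
    have h2 : K * (b + 1) + 1 ≤ n / 2 := by
      rw [Nat.le_div_iff_mul_le (by norm_num)]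
      omega
    have h3 : K * b ≤ n / 2 - 1 := by
      have : K * b ≤ K * (b + 1) := Nat.mul_le_mul_left _ (by omega)
      omega
    rw [Nat.le_div_iff_mul_le hKpos, mul_comm]
    exact h3
  have hcomp : Tendsto (fun n : ℕ => (((n / 2 - 1) / K : ℕ) : ℝ)) atTop atTop :=
    tendsto_natCast_atTop_atTop.comp hmse
  have hmulK : Tendsto (fun n : ℕ => c₂ * (((n / 2 - 1) / K : ℕ) : ℝ)) atTop atTop :=
    hcomp.const_mul_atTop hc₂
  have hneg : Tendsto (fun n : ℕ => -(c₂ * (((n / 2 - 1) / K : ℕ) : ℝ))) atTop atBot :=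
    tendsto_neg_atBot_iff.mpr hmulK
  have hexp0 : Tendsto (fun n : ℕ => Real.exp (-(c₂ * (((n / 2 - 1) / K : ℕ) : ℝ))))
      atTop (nhds 0) := Real.tendsto_exp_atBot.comp hneg
  have hexp : Tendsto (fun n : ℕ => c₂ * Real.exp (-c₂ * (((n / 2 - 1) / K : ℕ) : ℝ)))
      atTop (nhds 0) := by
    have := hexp0.const_mul c₂
    rw [mul_zero] at this
    simpa [neg_mul] using this
  have hTev : ∀ᶠ n in atTop,
      c₂ * Real.exp (-c₂ * (((n / 2 - 1) / K : ℕ) : ℝ)) < ε' / 8 :=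
    hexp.eventually (eventually_lt_nhds (by linarith))
  have hfinal : ∀ᶠ n in atTop, dist ((μ {η | Crossing (2 * n) n η}).toReal) 1 < ε := by
    filter_upwards [hA1ev, hTev, eventually_ge_atTop (100 * K + 100)] with n hA hT hn
    have hm1 : 1 ≤ (n / 2 - 1) / K := by
      rw [Nat.one_le_div_iff hKpos]
      omega
    have hCb := hcirc (n / 2 - 1) K hK1 hm1
    have hsum : (μ {η | Circuit ((n / 2 - 1) / K) (n / 2 - 1) η}).toReal +
        (μ {η | Circuit ((n / 2 - 1) / K) (n / 2 - 1) η}ᶜ).toReal = 1 := by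
      have hadd := prob_add_prob_compl (μ := μ) (CrossAux.measurableSet_circuit ((n / 2 - 1) / K) (n / 2 - 1))
      have h1 : ((μ {η | Circuit ((n / 2 - 1) / K) (n / 2 - 1) η} +
          μ {η | Circuit ((n / 2 - 1) / K) (n / 2 - 1) η}ᶜ)).toReal = (1 : ENNReal).toReal := by
        rw [hadd]
      rwa [ENNReal.toReal_add (measure_ne_top _ _) (measure_ne_top _ _),
        ENNReal.toReal_one] at h1
    have hcR : 1 - ε' / 4 ≤ (μ {η | Circuit ((n / 2 - 1) / K) (n / 2 - 1) η}).toReal := by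
      linarith
    have hks := CrossAux.key_step μ hFKG htrans hreflH K n hK1 hn
    have hxle1 : (μ {η | Crossing (2 * n) n η}).toReal ≤ 1 := by
      have := ENNReal.toReal_mono ENNReal.one_ne_top (prob_le_one (μ := μ)
        (s := {η | Crossing (2 * n) n η}))
      simpa using this
    have haR0 : 0 ≤ (μ {η | ArmToMiddle n (4 * K) η}).toReal := ENNReal.toReal_nonneg
    have hcR0 : 0 ≤ (μ {η | Circuit ((n / 2 - 1) / K) (n / 2 - 1) η}).toReal :=
      ENNReal.toReal_nonneg
    set aR := (μ {η | ArmToMiddle n (4 * K) η}).toReal with haRdef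
    set cR := (μ {η | Circuit ((n / 2 - 1) / K) (n / 2 - 1) η}).toReal with hcRdef
    set x := (μ {η | Crossing (2 * n) n η}).toReal with hxdef
    have p0 : (0 : ℝ) ≤ 1 - ε' / 8 := by linarith
    have p1 : (1 - ε' / 8) * (1 - ε' / 8) ≤ aR * aR := by nlinarith
    have p2 : (1 - ε' / 8) * (1 - ε' / 8) * (1 - ε' / 4) ≤ aR * aR * cR := by
      nlinarith [mul_nonneg haR0 haR0]
    have p3 : 1 - ε' < (1 - ε' / 8) * (1 - ε' / 8) * (1 - ε' / 4) := by
      nlinarith [mul_pos hε'pos hε'pos, mul_pos (mul_pos hε'pos hε'pos) hε'pos]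
    have hx : 1 - ε' < x := by linarith
    rw [Real.dist_eq, abs_of_nonpos (by linarith)]
    linarith
  exact eventually_atTop.1 hfinal
end
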